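/- arXiv:2102.05339 — 6 statements merged into one kernel-verified Lean document; each statement's English description precedes it below -/
import Mathlib

section
/- Let A be the disjoint union of nonempty proper subsets B and C, and let L(A) be the free Lie algebra on A. Define simple Lie commutators inductively: elements of A are simple of degree 1, and [u,v] is simple of degree p+q whenever u, v are simple of degrees p, q and [u,v] ≠ 0. Then every simple Lie commutator u of L(A) lies either in the subalgebra L(B) generated by B or in the subalgebra L(C≀B) generated by C≀B. -/
/-- Left-normed iterated Lie bracket. -/
noncomputable def leftNormed {L : Type*} [LieRing L] (x : L) (l : List L) : L :=
  l.foldl (fun u v => ⁅u, v⁆) x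

/-- The wreath set `C ≀ B`. -/
noncomputable def wreathSet {L : Type*} [LieRing L] (C B : Set L) : Set L :=
  {x | ∃ c ∈ C, ∃ l : List L, (∀ b ∈ l, b ∈ B) ∧ x = leftNormed c l}

/-- Simple Lie commutators of the free Lie algebra on `A`: elements of `A` are simple of
degree `1`, and `[u,v]` is simple of degree `p+q` whenever `u, v` are simple of degrees
`p, q` and `[u,v] ≠ 0`. -/
inductive IsSimpleLieCommutator (A : Type*) : FreeLieAlgebra ℤ A → ℕ → Prop
  | of (a : A) : IsSimpleLieCommutator A (FreeLieAlgebra.of ℤ a) 1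
  | bracket {u v : FreeLieAlgebra ℤ A} {p q : ℕ} :
      IsSimpleLieCommutator A u p → IsSimpleLieCommutator A v q →
      ⁅u, v⁆ ≠ 0 → IsSimpleLieCommutator A ⁅u, v⁆ (p + q)

/-! `C ≀ B` is closed under right bracketing by `B`, so the derivation `ad b` maps the
generators of `L(C ≀ B)` into `L(C ≀ B)`, hence all of it: `L(B)` normalizes `L(C ≀ B)`.
The union of a Lie subalgebra and a Lie subalgebra it normalizes is closed under brackets, and
it contains `A = B ∪ C`, so it contains every simple commutator. -/

namespace LieSubalgebra

variable {R L : Type*} [CommRing R] [LieRing L] [LieAlgebra R L]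

lemma mem_normalizer_lieSpan_of_forall_lie_mem {W : Set L} {b : L}
    (hW : ∀ w ∈ W, ⁅w, b⁆ ∈ lieSpan R L W) : b ∈ (lieSpan R L W).normalizer := by
  set S := lieSpan R L W
  rw [mem_normalizer_iff']
  intro x hx
  induction hx using lieSpan_induction with
  | mem w hw => exact hW w hw
  | zero => simpa only [zero_lie] using S.zero_mem
  | add x y _ _ hx hy => simpa only [add_lie] using S.add_mem hx hy
  | smul r x _ hx => simpa only [smul_lie] using S.smul_mem r hx
  | lie x y hxS hyS hx hy =>
    rw [lie_lie]
    exact S.sub_mem (S.lie_mem hxS hy) (S.lie_mem hyS hx)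

lemma lie_mem_or_lie_mem_of_le_normalizer {K H : LieSubalgebra R L} (hKH : K ≤ H.normalizer)
    {x y : L} (hx : x ∈ K ∨ x ∈ H) (hy : y ∈ K ∨ y ∈ H) : ⁅x, y⁆ ∈ K ∨ ⁅x, y⁆ ∈ H := by
  rcases hx with hxK | hxH <;> rcases hy with hyK | hyH
  · exact .inl (K.lie_mem hxK hyK)
  · exact .inr ((H.mem_normalizer_iff x).mp (hKH hxK) y hyH)
  · exact .inr ((H.mem_normalizer_iff' y).mp (hKH hyK) x hxH)
  · exact .inr (H.lie_mem hxH hyH)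

end LieSubalgebra

section WreathSet

variable {L : Type*} [LieRing L]

lemma subset_wreathSet (C B : Set L) : C ⊆ wreathSet C B :=
  fun c hc => ⟨c, hc, [], by simp, rfl⟩

lemma lie_mem_wreathSet {C B : Set L} {w b : L} (hw : w ∈ wreathSet C B) (hb : b ∈ B) :
    ⁅w, b⁆ ∈ wreathSet C B := by
  obtain ⟨c, hc, l, hl, rfl⟩ := hw
  refine ⟨c, hc, l ++ [b], ?_, by simp [leftNormed, List.foldl_append]⟩
  simpa [or_imp, forall_and] using ⟨hl, hb⟩

lemma lieSpan_le_normalizer_lieSpan_wreathSet (R : Type*) [CommRing R] [LieAlgebra R L]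
    (C B : Set L) :
    LieSubalgebra.lieSpan R L B ≤ (LieSubalgebra.lieSpan R L (wreathSet C B)).normalizer :=
  LieSubalgebra.lieSpan_le.mpr fun _ hb =>
    LieSubalgebra.mem_normalizer_lieSpan_of_forall_lie_mem fun _ hw =>
      LieSubalgebra.subset_lieSpan (lie_mem_wreathSet hw hb)

end WreathSet

theorem simple_commutator_mem_elimination_summand_general (A : Type*) (B C : Set A)
    (hunion : B ∪ C = Set.univ)
    (u : FreeLieAlgebra ℤ A) (n : ℕ) (hu : IsSimpleLieCommutator A u n) :
    u ∈ LieSubalgebra.lieSpan ℤ (FreeLieAlgebra ℤ A) (FreeLieAlgebra.of ℤ '' B) ∨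
    u ∈ LieSubalgebra.lieSpan ℤ (FreeLieAlgebra ℤ A)
      (wreathSet (FreeLieAlgebra.of ℤ '' C) (FreeLieAlgebra.of ℤ '' B)) := by
  induction hu with
  | of a =>
    rcases (hunion ▸ Set.mem_univ a : a ∈ B ∪ C) with ha | ha
    · exact .inl (LieSubalgebra.subset_lieSpan ⟨a, ha, rfl⟩)
    · exact .inr (LieSubalgebra.subset_lieSpan (subset_wreathSet _ _ ⟨a, ha, rfl⟩))
  | bracket _ _ _ ihu ihv =>
    exact LieSubalgebra.lie_mem_or_lie_mem_of_le_normalizer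
      (lieSpan_le_normalizer_lieSpan_wreathSet ℤ _ _) ihu ihv

/-- Every simple Lie commutator of `L(A)` lies either in `L(B)` or in `L(C≀B)`. -/
theorem simple_commutator_mem_elimination_summand (A : Type*) (B C : Set A)
    (hdisj : B ∩ C = ∅) (hunion : B ∪ C = Set.univ)
    (hBne : B.Nonempty) (hCne : C.Nonempty)
    (hBproper : B ≠ Set.univ) (hCproper : C ≠ Set.univ)
    (u : FreeLieAlgebra ℤ A) (n : ℕ) (hu : IsSimpleLieCommutator A u n) :
    u ∈ LieSubalgebra.lieSpan ℤ (FreeLieAlgebra ℤ A) (FreeLieAlgebra.of ℤ '' B) ∨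
    u ∈ LieSubalgebra.lieSpan ℤ (FreeLieAlgebra ℤ A)
      (wreathSet (FreeLieAlgebra.of ℤ '' C) (FreeLieAlgebra.of ℤ '' B)) :=
  simple_commutator_mem_elimination_summand_general A B C hunion u n hu
end

section
/- In an associative ℤ-algebra, for any n ≥ 2 and elements a₁, …, a_n, the left-normed Lie commutator satisfies [a₁, …, a_n] = Σ_{κ=0}^{n-1} Σ_{σ ∈ S_{n,κ}} (−1)^κ a_{σ(1)} ⋯ a_{σ(n)}, where S_{n,κ} is the set of permutations σ of {1,…,n} with σ(1) > ⋯ > σ(κ) > σ(κ+1) < σ(κ+2) < ⋯ < σ(n). -/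
/-!
Expanding the last bracket, `[w, b] = w b - b w` sends the new letter `b` either to the far
right of every word of `w` or, with a sign, to the far left. By induction, the left-normed
commutator `[a₁, …, a_n]` is the sum over subsets `S ⊆ {2, …, n}` of `(-1)^|S|` times the word
listing the letters of `S` in decreasing order, then `a₁` and the remaining letters in increasing
order. Read as a permutation, such a word has its valley `1` at position `|S| + 1`, and every
`σ ∈ S_{n,κ}` arises from exactly one `S`, namely the set of the `κ` values before its valley.
-/

open scoped Classical

/-- Left-normed Lie commutator of a list of elements of an associative ring,
with the bracket `⁅u,v⁆ = u*v - v*u`. -/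
noncomputable def lieList {A : Type*} [Ring A] : List A → A
  | [] => 0
  | x :: xs => xs.foldl (fun u v => ⁅u, v⁆) x

/-- `σ ∈ S_{n,κ}` (0-indexed): `σ` is strictly decreasing on the first `κ+1` positions and
strictly increasing from position `κ` on. -/
def IsValley (n κ : ℕ) (σ : Equiv.Perm (Fin n)) : Prop :=
  (∀ i j : Fin n, i < j → (j : ℕ) ≤ κ → σ j < σ i) ∧
  (∀ i j : Fin n, i < j → κ ≤ (i : ℕ) → σ i < σ j)

theorem Finset.sort_insert_of_forall_lt {α : Type*} [LinearOrder α] {s : Finset α} {y : α}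
    (h : ∀ z ∈ s, z < y) : (insert y s).sort = s.sort ++ [y] := by
  refine (sortedLT_sort _).eq_of_mem_iff (List.sortedLT_iff_pairwise.mpr ?_) (by simp [or_comm])
  exact List.pairwise_append.mpr ⟨(sortedLT_sort s).pairwise, by simp, by simpa using h⟩

theorem lieList_append_singleton {A : Type*} [Ring A] {l : List A} (hl : l ≠ []) (z : A) :
    lieList (l ++ [z]) = ⁅lieList l, z⁆ := by
  obtain ⟨x, xs, rfl⟩ := List.exists_cons_of_ne_nil hl
  simp [lieList, List.foldl_append]

theorem lieList_map_sort_insert_eq_sum {ι A : Type*} [LinearOrder ι] [Ring A] (a : ι → A) {x : ι}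
    {s : Finset ι} (hx : ∀ y ∈ s, x < y) :
    lieList ((insert x s).sort.map a) = ∑ S ∈ s.powerset,
      (-1 : ℤ) ^ S.card • ((S.sort.reverse ++ (insert x s \ S).sort).map a).prod := by
  induction s using Finset.induction_on_max with
  | empty => simp [lieList]
  | insert y t hty ih =>
    have hxy : x < y := hx y (Finset.mem_insert_self y t)
    have hyt : y ∉ t := fun hy => (hty y hy).false
    have hxty : ∀ z ∈ insert x t, z < y := Finset.forall_mem_insert _ _ _ |>.mpr ⟨hxy, hty⟩
    have hyxt : y ∉ insert x t := fun hy => (hxty y hy).false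
    set F : Finset ι → A := fun S =>
      (-1 : ℤ) ^ S.card • ((S.sort.reverse ++ (insert x t \ S).sort).map a).prod
    have hy_right : ∀ S ∈ t.powerset, (-1 : ℤ) ^ S.card •
        ((S.sort.reverse ++ (insert y (insert x t) \ S).sort).map a).prod = F S * a y := by
      intro S hS
      have hyS : y ∉ S := fun hy => hyt (Finset.mem_powerset.mp hS hy)
      rw [Finset.insert_sdiff_of_notMem _ hyS,
        Finset.sort_insert_of_forall_lt fun z hz => hxty z (Finset.sdiff_subset hz)]
      simp only [F, ← List.append_assoc, List.map_append, List.prod_append, List.map_singleton,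
        List.prod_singleton, smul_mul_assoc]
    have hy_left : ∀ S ∈ t.powerset, (-1 : ℤ) ^ (insert y S).card •
        (((insert y S).sort.reverse ++ (insert y (insert x t) \ insert y S).sort).map a).prod =
          -(a y * F S) := by
      intro S hS
      have hSt := Finset.mem_powerset.mp hS
      rw [Finset.insert_sdiff_insert, Finset.sdiff_insert_of_notMem hyxt,
        Finset.card_insert_of_notMem fun hy => hyt (hSt hy),
        Finset.sort_insert_of_forall_lt fun z hz => hty z (hSt hz)]
      simp only [F, List.reverse_append, List.reverse_singleton, List.cons_append,
        List.nil_append, List.map_cons, List.prod_cons, pow_succ, mul_neg_one, neg_smul,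
        mul_smul_comm]
    have hne : (insert x t).sort.map a ≠ [] :=
      List.ne_nil_of_mem (List.mem_map_of_mem ((Finset.mem_sort _).mpr (t.mem_insert_self x)))
    rw [Finset.insert_comm x y, Finset.sort_insert_of_forall_lt hxty, List.map_append,
      List.map_singleton, lieList_append_singleton hne,
      ih fun z hz => hx z (Finset.mem_insert_of_mem hz), Finset.sum_powerset_insert hyt,
      Finset.sum_congr rfl hy_right, Finset.sum_congr rfl hy_left, Ring.lie_def,
      Finset.sum_mul, Finset.mul_sum, Finset.sum_neg_distrib, sub_eq_add_neg]

section Valley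

variable {n κ : ℕ} {σ : Equiv.Perm (Fin n)}

theorem isValley_iff_pairwise : IsValley n κ σ ↔
    ((List.ofFn σ).take (κ + 1)).Pairwise (· > ·) ∧ ((List.ofFn σ).drop κ).Pairwise (· < ·) := by
  simp only [List.pairwise_iff_getElem, List.length_take, List.length_drop, List.length_ofFn,
    List.getElem_take, List.getElem_drop, List.getElem_ofFn, lt_min_iff]
  constructor
  · rintro ⟨hdec, hinc⟩
    exact ⟨fun i j _ hj hij => hdec ⟨i, by omega⟩ ⟨j, hj.2⟩ hij (by simp; omega),
      fun i j _ _ hij => hinc ⟨κ + i, by omega⟩ ⟨κ + j, by omega⟩ (by simpa using hij) (by simp)⟩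
  · rintro ⟨hdec, hinc⟩
    refine ⟨fun i j hij hj => hdec i j ⟨by omega, i.2⟩ ⟨by omega, j.2⟩ hij, fun i j hij hi => ?_⟩
    have hij' : (i : ℕ) < j := hij
    convert hinc (i - κ) (j - κ) (by omega) (by omega) (by omega) using 2 <;> ext <;> simp <;> omega

theorem ofFn_eq_of_isValley (h : IsValley n κ σ) :
    List.ofFn σ = ((List.ofFn σ).take κ).toFinset.sort.reverse ++
      ((List.ofFn σ).take κ).toFinsetᶜ.sort := by
  obtain ⟨hdec, hinc⟩ := isValley_iff_pairwise.mp h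
  set L := List.ofFn σ
  have hdisj : (L.take κ ++ L.drop κ).Nodup := by
    rw [List.take_append_drop]
    exact List.nodup_ofFn.mpr σ.injective
  have hmem_drop (z : Fin n) : z ∈ L.drop κ ↔ z ∉ L.take κ := by
    have hz : z ∈ L.take κ ++ L.drop κ := by
      rw [List.take_append_drop, List.mem_ofFn]
      exact ⟨σ.symm z, σ.apply_symm_apply z⟩
    rw [List.nodup_append] at hdisj
    grind
  have htake : L.take κ = (L.take κ).toFinset.sort.reverse :=
    (hdec.sublist (List.take_sublist_take_left κ.le_succ)).sortedGT
      |>.eq_reverse_of_mem_iff_of_sortedLT (by simp) (Finset.sortedLT_sort _)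
  have hdrop : L.drop κ = (L.take κ).toFinsetᶜ.sort :=
    hinc.sortedLT.eq_of_mem_iff (Finset.sortedLT_sort _) (by simpa using hmem_drop)
  rw [← htake, ← hdrop, List.take_append_drop]

theorem exists_perm_ofFn_eq {L : List (Fin n)} (hL : L.Nodup) (hlen : L.length = n) :
    ∃ σ : Equiv.Perm (Fin n), List.ofFn σ = L := by
  let f : Fin n → Fin n := fun i => L[(i : ℕ)]
  have hf : Function.Injective f := fun i j hij => Fin.ext (hL.getElem_inj_iff.mp hij)
  exact ⟨Equiv.ofBijective f (Finite.injective_iff_bijective.mp hf),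
    List.ext_getElem (by simp [hlen]) fun i _ _ => by simp [f]⟩

theorem isValley_of_ofFn_eq [NeZero n] {S : Finset (Fin n)} (h0 : 0 ∉ S)
    (hσ : List.ofFn σ = S.sort.reverse ++ Sᶜ.sort) : IsValley n S.card σ := by
  have hcompl : Sᶜ.sort = 0 :: (Sᶜ.erase 0).sort := by
    conv_lhs => rw [← Finset.insert_erase (Finset.mem_compl.mpr h0)]
    exact Finset.sort_insert _ (fun b _ => Fin.zero_le b) (Finset.notMem_erase _ _)
  have hlen : S.sort.reverse.length = S.card := by simp
  rw [isValley_iff_pairwise, hσ, ← hlen, List.take_length_add_append, List.drop_left' rfl]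
  refine ⟨?_, (Finset.sortedLT_sort _).pairwise⟩
  rw [hcompl, List.take_succ_cons, List.take_zero]
  refine List.pairwise_append.mpr ⟨?_, by simp, ?_⟩
  · exact List.pairwise_reverse.mpr (Finset.sortedLT_sort S).pairwise
  · simp only [List.mem_singleton, List.mem_reverse, Finset.mem_sort]
    rintro z hz _ rfl
    exact Fin.pos_iff_ne_zero.mpr (ne_of_mem_of_not_mem hz h0)

theorem take_ofFn_mem_powersetCard [NeZero n] (hκ : κ < n) (h : IsValley n κ σ) :
    ((List.ofFn σ).take κ).toFinset ∈ Finset.powersetCard κ {0}ᶜ := by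
  refine Finset.mem_powersetCard.mpr ⟨fun z hz => ?_, ?_⟩
  · obtain ⟨p, hp, rfl⟩ := List.mem_iff_getElem.mp (List.mem_toFinset.mp hz)
    simp only [List.length_take, List.length_ofFn, lt_min_iff] at hp
    have := h.1 ⟨p, hp.2⟩ ⟨κ, hκ⟩ (Fin.mk_lt_mk.mpr hp.1) le_rfl
    simpa using (Fin.zero_le _).trans_lt this |>.ne'
  · have hnd := (List.take_sublist κ _).nodup (List.nodup_ofFn.mpr σ.injective)
    simp [List.toFinset_card_of_nodup hnd, hκ.le]

theorem sum_ite_isValley_eq_sum_powersetCard [NeZero n] {M : Type*} [AddCommMonoid M]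
    (f : List (Fin n) → M) (hκ : κ < n) :
    ∑ σ : Equiv.Perm (Fin n), (if IsValley n κ σ then f (List.ofFn σ) else 0) =
      ∑ S ∈ Finset.powersetCard κ {0}ᶜ, f (S.sort.reverse ++ Sᶜ.sort) := by
  rw [← Finset.sum_filter]
  refine Finset.sum_bij (fun σ _ => ((List.ofFn σ).take κ).toFinset)
    (fun σ hσ => take_ofFn_mem_powersetCard hκ (Finset.mem_filter.mp hσ).2) ?_ ?_
    (fun σ hσ => congrArg f (ofFn_eq_of_isValley (Finset.mem_filter.mp hσ).2))
  · intro σ₁ h₁ σ₂ h₂ he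
    have h := ofFn_eq_of_isValley (Finset.mem_filter.mp h₁).2
    rw [he, ← ofFn_eq_of_isValley (Finset.mem_filter.mp h₂).2] at h
    exact Equiv.coe_fn_injective (List.ofFn_injective h)
  · intro S hS
    obtain ⟨hS0, hcard⟩ := Finset.mem_powersetCard.mp hS
    obtain ⟨σ, hσ⟩ := exists_perm_ofFn_eq (L := S.sort.reverse ++ Sᶜ.sort)
      (List.nodup_append.mpr ⟨List.nodup_reverse.mpr (Finset.sort_nodup _ _),
        Finset.sort_nodup _ _, by simpa using fun a ha b hb => ne_of_mem_of_not_mem ha hb⟩)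
      (by simp [Finset.card_add_card_compl])
    have h0 : (0 : Fin n) ∉ S := fun h => Finset.mem_compl.mp (hS0 h) (Finset.mem_singleton_self 0)
    refine ⟨σ, Finset.mem_filter.mpr ⟨Finset.mem_univ σ, hcard ▸ isValley_of_ofFn_eq h0 hσ⟩, ?_⟩
    rw [hσ, List.take_left' (by simp [hcard])]
    simp

end Valley

theorem leftNormed_commutator_expansion_general {A : Type*} [Ring A]
    (n : ℕ) (a : Fin n → A) :
    lieList (List.ofFn a) =
      ∑ κ ∈ Finset.range n, ∑ σ : Equiv.Perm (Fin n),
        if IsValley n κ σ then ((-1 : ℤ) ^ κ) • (List.ofFn fun i => a (σ i)).prod else 0 := by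
  cases n with
  | zero => simp [lieList]
  | succ m =>
    have hexp := lieList_map_sort_insert_eq_sum a (s := {0}ᶜ) fun y hy =>
      Fin.pos_iff_ne_zero.mpr (Finset.notMem_singleton.mp (Finset.mem_compl.mp hy))
    rw [Finset.insert_compl_self, Fin.sort_univ, ← List.ofFn_eq_map] at hexp
    rw [hexp, Finset.sum_powerset, Finset.card_compl, Finset.card_singleton, Fintype.card_fin,
      Nat.add_sub_cancel]
    refine Finset.sum_congr rfl fun κ hκ => ?_
    have hvalleys := sum_ite_isValley_eq_sum_powersetCard (fun L => (-1 : ℤ) ^ κ • (L.map a).prod)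
      (Finset.mem_range.mp hκ)
    simp only [List.map_ofFn, Function.comp_def] at hvalleys
    rw [hvalleys]
    refine Finset.sum_congr rfl fun S hS => ?_
    rw [(Finset.mem_powersetCard.mp hS).2, Finset.compl_eq_univ_sdiff]

/-- Dynkin-type expansion of a left-normed Lie commutator in an associative ℤ-algebra:
`[a₁,…,a_n] = Σ_{κ=0}^{n-1} Σ_{σ ∈ S_{n,κ}} (−1)^κ a_{σ(1)} ⋯ a_{σ(n)}`. -/
theorem leftNormed_commutator_expansion {A : Type*} [Ring A] [Algebra ℤ A]
    (n : ℕ) (hn : 2 ≤ n) (a : Fin n → A) :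
    lieList (List.ofFn a) =
      ∑ κ ∈ Finset.range n, ∑ σ : Equiv.Perm (Fin n),
        if IsValley n κ σ then ((-1 : ℤ) ^ κ) • (List.ofFn fun i => a (σ i)).prod else 0 :=
  leftNormed_commutator_expansion_general n a
end

section
/- In any Lie algebra, for elements a, b, c₁, …, c_r one has [a, b, c₁, …, c_r] = Σ_{i=0}^{r} Σ_{σ ∈ K_i} [[a, c_{σ(1)}, …, c_{σ(i)}], [b, c_{σ(i+1)}, …, c_{σ(r)}]], where K_i is the set of permutations σ of {1, …, r} with σ(1) < ⋯ < σ(i) and σ(i+1) < ⋯ < σ(r). -/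
open scoped Classical

/-- `σ ∈ K_i` (0-indexed): `σ` is strictly increasing on the first `i` positions and
strictly increasing on the remaining positions, i.e. an `(i, r−i)`-shuffle. -/
def IsShuffle (r i : ℕ) (σ : Equiv.Perm (Fin r)) : Prop :=
  (∀ j k : Fin r, j < k → (k : ℕ) < i → σ j < σ k) ∧
  (∀ j k : Fin r, j < k → i ≤ (j : ℕ) → σ j < σ k)

/-!
Right bracketing with a fixed `z` is a derivation, `[[x, y], z] = [[x, z], y] + [x, [y, z]]`, so
expanding `[[a, b], c₁, …, c_r]` one `cₖ` at a time sends each `cₖ` either to the `a`-side or to the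
`b`-side. This gives a sum over subsets `S` of `{1, …, r}` of `[[a, c_S], [b, c_Sᶜ]]`, both index
lists increasing. An `(i, r − i)`-shuffle is determined by the image of its first `i` positions,
and every `i`-subset arises this way, which reindexes that sum as the double sum over `i` and `K_i`.
-/

namespace Finset

theorem powerset_map {α β : Type*} (f : α ↪ β) (s : Finset α) :
    (s.map f).powerset = s.powerset.map (mapEmbedding f).toEmbedding := by
  ext t
  simp only [mem_powerset, mem_map, RelEmbedding.coe_toEmbedding, mapEmbedding_apply]
  constructor
  · intro h
    obtain ⟨u, hu, rfl⟩ := subset_map_iff.mp h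
    exact ⟨u, hu, rfl⟩
  · rintro ⟨u, hu, rfl⟩
    exact map_subset_map.mpr hu

end Finset

namespace Fin

theorem sum_finset_succ {M : Type*} [AddCommMonoid M] {n : ℕ} (f : Finset (Fin (n + 1)) → M) :
    ∑ T, f T = ∑ S : Finset (Fin n),
      (f (S.map (succEmb n)) + f (insert 0 (S.map (succEmb n)))) := by
  rw [← Finset.powerset_univ, Fin.univ_succ, Finset.cons_eq_insert,
    Finset.sum_powerset_insert (by simp), ← Finset.sum_add_distrib]
  rw [Finset.powerset_map, Finset.sum_map, Finset.powerset_univ]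
  rfl

theorem compl_map_succEmb {n : ℕ} (S : Finset (Fin n)) :
    (S.map (succEmb n))ᶜ = insert 0 (Sᶜ.map (succEmb n)) := by
  ext x; cases x using Fin.cases <;> simp

theorem sort_map_succEmb {n : ℕ} (S : Finset (Fin n)) :
    (S.map (succEmb n)).sort = S.sort.map succ :=
  ((strictMono_succ.strictMonoOn _).map_finsetSort).symm

theorem sort_insert_zero_map_succEmb {n : ℕ} (S : Finset (Fin n)) :
    (insert 0 (S.map (succEmb n))).sort = 0 :: S.sort.map succ := by
  rw [Finset.sort_insert _ (fun _ _ => Fin.zero_le _) (by simp), sort_map_succEmb]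

end Fin

section LieRing

variable {L : Type*} [LieRing L]

@[simp]
theorem leftNormed_nil (x : L) : leftNormed x [] = x := rfl

@[simp]
theorem leftNormed_cons (x y : L) (l : List L) :
    leftNormed x (y :: l) = leftNormed ⁅x, y⁆ l := rfl

theorem lie_lie_eq_lie_lie_add (a b z : L) : ⁅⁅a, b⁆, z⁆ = ⁅⁅a, z⁆, b⁆ + ⁅a, ⁅b, z⁆⁆ := by
  rw [lie_lie, ← lie_skew ⁅a, z⁆ b]
  abel

theorem leftNormed_add (x y : L) (l : List L) :
    leftNormed (x + y) l = leftNormed x l + leftNormed y l := by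
  induction l generalizing x y with
  | nil => rfl
  | cons z l ih => simp [add_lie, ih]

noncomputable def splitBracket (a b : L) {r : ℕ} (c : Fin r → L) (S : Finset (Fin r)) : L :=
  ⁅leftNormed a (S.sort.map c), leftNormed b (Sᶜ.sort.map c)⁆

theorem leftNormed_lie_eq_sum_splitBracket (a b : L) {r : ℕ} (c : Fin r → L) :
    leftNormed ⁅a, b⁆ (List.ofFn c) = ∑ S, splitBracket a b c S := by
  induction r generalizing a b with
  | zero =>
    rw [Fintype.sum_subsingleton _ ∅]
    simp [splitBracket, Finset.univ_eq_empty]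
  | succ r ih =>
    rw [List.ofFn_succ, leftNormed_cons, lie_lie_eq_lie_lie_add, leftNormed_add, ih, ih,
      Fin.sum_finset_succ, ← Finset.sum_add_distrib]
    congr! 1 with S
    simp [splitBracket, Fin.compl_map_succEmb, Fin.sort_map_succEmb,
      Fin.sort_insert_zero_map_succEmb, Function.comp_def, add_comm]

end LieRing

theorem Finset.sort_eq_ofFn_orderEmbOfFin {α : Type*} [LinearOrder α] (s : Finset α) :
    s.sort = List.ofFn (s.orderEmbOfFin rfl) := by
  refine List.ext_getElem (by simp) fun n h _ => ?_
  simp [Finset.orderEmbOfFin_apply]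

namespace Equiv.Perm

variable {r : ℕ}

noncomputable def shuffleOf (S : Finset (Fin r)) : Perm (Fin r) :=
  (finCongr (S.card_add_card_compl.trans (Fintype.card_fin r))).symm.trans
    (finSumFinEquiv.symm.trans (finSumEquivOfFinset rfl rfl))

theorem shuffleOf_apply_of_lt {S : Finset (Fin r)} {i : ℕ} (hS : S.card = i) (j : Fin r)
    (hj : (j : ℕ) < i) : shuffleOf S j = S.orderEmbOfFin hS ⟨j, hj⟩ := by
  subst hS
  have hj' : Fin.cast (S.card_add_card_compl.trans (Fintype.card_fin r)).symm j =
      Fin.castAdd _ ⟨j, hj⟩ := rfl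
  simp only [shuffleOf, Equiv.trans_apply, finCongr_symm, finCongr_apply, hj',
    finSumFinEquiv_symm_apply_castAdd, finSumEquivOfFinset_inl]

theorem shuffleOf_apply_of_le {S : Finset (Fin r)} {i : ℕ} (hS : S.card = i) (j : Fin r)
    (hj : i ≤ (j : ℕ)) :
    shuffleOf S j = Sᶜ.orderEmbOfFin (by simp [Finset.card_compl, hS])
      ⟨j - i, Nat.sub_lt_sub_right hj j.isLt⟩ := by
  subst hS
  have hj' : Fin.cast (S.card_add_card_compl.trans (Fintype.card_fin r)).symm j =
      Fin.natAdd _ ⟨j - S.card, by simp only [Finset.card_compl, Fintype.card_fin]; omega⟩ :=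
      Fin.ext (by simp only [Fin.val_cast, Fin.natAdd_mk]; omega)
  simp only [shuffleOf, Equiv.trans_apply, finCongr_symm, finCongr_apply, hj',
    finSumFinEquiv_symm_apply_natAdd, finSumEquivOfFinset_inr]
  exact Finset.orderEmbOfFin_eq_orderEmbOfFin_iff.mpr rfl

theorem ofFn_comp_shuffleOf {α : Type*} (S : Finset (Fin r)) (c : Fin r → α) :
    List.ofFn (fun j => c (shuffleOf S j)) = S.sort.map c ++ Sᶜ.sort.map c := by
  rw [List.ofFn_congr (S.card_add_card_compl.trans (Fintype.card_fin r)).symm, List.ofFn_add,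
    Finset.sort_eq_ofFn_orderEmbOfFin, Finset.sort_eq_ofFn_orderEmbOfFin, List.map_ofFn,
    List.map_ofFn]
  congr 1 <;> refine List.ofFn_inj.mpr (funext fun k => ?_)
  · simp [shuffleOf_apply_of_lt rfl]
  · rw [Function.comp_apply, shuffleOf_apply_of_le rfl _ (by simp)]
    exact congrArg c (Finset.orderEmbOfFin_eq_orderEmbOfFin_iff.mpr (by simp))

theorem isShuffle_shuffleOf (S : Finset (Fin r)) : IsShuffle r S.card (shuffleOf S) := by
  refine ⟨fun j k hjk hk => ?_, fun j k hjk hj => ?_⟩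
  · rw [shuffleOf_apply_of_lt rfl j (by omega), shuffleOf_apply_of_lt rfl k hk]
    exact (S.orderEmbOfFin rfl).strictMono hjk
  · rw [shuffleOf_apply_of_le rfl j hj, shuffleOf_apply_of_le rfl k (by omega)]
    exact (Sᶜ.orderEmbOfFin _).strictMono (Fin.mk_lt_mk.mpr (by omega))

def firstBlock (σ : Perm (Fin r)) (i : ℕ) : Finset (Fin r) :=
  Finset.univ.filter fun x => ((σ.symm x : Fin r) : ℕ) < i

@[simp]
theorem apply_mem_firstBlock {σ : Perm (Fin r)} {i : ℕ} {j : Fin r} :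
    σ j ∈ firstBlock σ i ↔ (j : ℕ) < i := by
  simp [firstBlock]

theorem card_firstBlock (σ : Perm (Fin r)) {i : ℕ} (hi : i ≤ r) : (firstBlock σ i).card = i := by
  rw [Finset.card_equiv σ.symm (fun x => by simp [firstBlock] : ∀ x, x ∈ firstBlock σ i ↔
    σ.symm x ∈ Finset.univ.filter fun j : Fin r => (j : ℕ) < i), Fin.card_filter_val_lt,
    min_eq_right hi]

theorem firstBlock_shuffleOf (S : Finset (Fin r)) : firstBlock (shuffleOf S) S.card = S := by
  ext x
  obtain ⟨j, rfl⟩ := (shuffleOf S).surjective x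
  rw [apply_mem_firstBlock]
  rcases lt_or_ge (j : ℕ) S.card with hj | hj
  · simp [hj, shuffleOf_apply_of_lt rfl j hj, Finset.orderEmbOfFin_mem]
  · simpa [hj.not_gt, shuffleOf_apply_of_le rfl j hj] using
      Finset.mem_compl.mp (Finset.orderEmbOfFin_mem Sᶜ _ _)

theorem _root_.IsShuffle.eq_shuffleOf {σ : Perm (Fin r)} {i : ℕ} (hi : i ≤ r)
    (hσ : IsShuffle r i σ) : σ = shuffleOf (firstBlock σ i) := by
  set T := firstBlock σ i
  have hT : T.card = i := card_firstBlock σ hi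
  have hTc : Tᶜ.card = r - i := by simp [Finset.card_compl, hT]
  have first_block : (fun k : Fin i => σ (Fin.castLE hi k)) = T.orderEmbOfFin hT :=
    Finset.orderEmbOfFin_unique hT (fun k => by simp [T])
      (fun k l hkl => hσ.1 _ _ hkl (by simp))
  have second_block : (fun k : Fin (r - i) => σ ⟨i + k, by omega⟩) = Tᶜ.orderEmbOfFin hTc :=
    Finset.orderEmbOfFin_unique hTc (fun k => by simp [T])
      (fun k l hkl => hσ.2 _ _ (Fin.mk_lt_mk.mpr (by simpa using hkl)) le_self_add)
  ext j : 1
  rcases lt_or_ge (j : ℕ) i with hj | hj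
  · rw [shuffleOf_apply_of_lt hT j hj, ← congrFun first_block]
    rfl
  · rw [shuffleOf_apply_of_le hT j hj, ← congrFun second_block]
    exact congrArg σ (Fin.ext (by simp only; omega))

theorem sum_ite_isShuffle {M : Type*} [AddCommMonoid M] {i : ℕ} (hi : i ≤ r)
    (f : Perm (Fin r) → M) :
    ∑ σ, (if IsShuffle r i σ then f σ else 0) =
      ∑ S ∈ Finset.univ.powersetCard i, f (shuffleOf S) := by
  rw [← Finset.sum_filter]
  refine Finset.sum_nbij' (firstBlock · i) shuffleOf ?_ ?_ ?_ ?_ ?_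
  · intro σ _
    simp [card_firstBlock σ hi]
  · intro S hS
    obtain ⟨-, rfl⟩ := Finset.mem_powersetCard.mp hS
    simpa using isShuffle_shuffleOf S
  · intro σ hσ
    exact ((Finset.mem_filter.mp hσ).2.eq_shuffleOf hi).symm
  · intro S hS
    obtain ⟨-, rfl⟩ := Finset.mem_powersetCard.mp hS
    exact firstBlock_shuffleOf S
  · intro σ hσ
    rw [← (Finset.mem_filter.mp hσ).2.eq_shuffleOf hi]

end Equiv.Perm

theorem leftNormed_bracket_shuffle_expansion_general {L : Type*} [LieRing L]
    (a b : L) (r : ℕ) (c : Fin r → L) :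
    leftNormed ⁅a, b⁆ (List.ofFn c) =
      ∑ i ∈ Finset.range (r + 1), ∑ σ : Equiv.Perm (Fin r),
        if IsShuffle r i σ then
          ⁅leftNormed a ((List.ofFn fun j => c (σ j)).take i),
            leftNormed b ((List.ofFn fun j => c (σ j)).drop i)⁆
        else 0 := by
  rw [leftNormed_lie_eq_sum_splitBracket, ← Finset.powerset_univ, Finset.sum_powerset,
    Finset.card_univ, Fintype.card_fin]
  refine Finset.sum_congr rfl fun i hi => ?_
  rw [Equiv.Perm.sum_ite_isShuffle (Nat.lt_succ_iff.mp (Finset.mem_range.mp hi))]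
  refine Finset.sum_congr rfl fun S hS => ?_
  obtain ⟨-, rfl⟩ := Finset.mem_powersetCard.mp hS
  rw [Equiv.Perm.ofFn_comp_shuffleOf, List.take_left' (by simp), List.drop_left' (by simp),
    splitBracket]

/-- In any Lie algebra,
`[a, b, c₁, …, c_r] = Σ_{i=0}^{r} Σ_{σ ∈ K_i} [[a, c_{σ(1)}, …, c_{σ(i)}], [b, c_{σ(i+1)}, …, c_{σ(r)}]]`. -/
theorem leftNormed_bracket_shuffle_expansion {L : Type*} [LieRing L] [LieAlgebra ℤ L]
    (a b : L) (r : ℕ) (c : Fin r → L) :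
    leftNormed ⁅a, b⁆ (List.ofFn c) =
      ∑ i ∈ Finset.range (r + 1), ∑ σ : Equiv.Perm (Fin r),
        if IsShuffle r i σ then
          ⁅leftNormed a ((List.ofFn fun j => c (σ j)).take i),
            leftNormed b ((List.ofFn fun j => c (σ j)).drop i)⁆
        else 0 :=
  leftNormed_bracket_shuffle_expansion_general a b r c
end

section
/- Let B be a finite set, L(B) the free Lie algebra over ℤ on B, and T(B) its universal enveloping algebra (the free associative ℤ-algebra on B). Let M be a totally ordered ℤ-basis of L(B). For each nondecreasing product u = v₁v₂⋯v_κ (v_i ∈ M, v₁ ≤ ⋯ ≤ v_κ, κ ≥ 0) choose an arbitrary rearrangement u′ = v_{π(1)}⋯v_{π(κ)}. Then the set {u′ : u ∈ M^<} of all chosen rearrangements is a ℤ-basis of T(B). -/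
/-!
The classical proof of the Poincaré–Birkhoff–Witt theorem works for any Lie algebra `L` that is
free as a module with an ordered basis `(b i)`. On the free module `V` spanned by the sorted words
there is a representation of `L` in which `b i` sends a word `l` to its ordered insertion `i l`
plus words of length at most `|l|`: it is built letter by letter from the rule
`x_i x_j = x_j x_i + [x_i, x_j]`, and the Jacobi identity is what makes it a representation.
Since `T(B)` is the universal enveloping algebra of `L(B)`, the representation extends to `T(B)`,
where the sorted product of `l` sends the empty word to `l`; so sorted products are linearly
independent. They span, because the same rule straightens any product of basis elements into its
sorted rearrangement modulo shorter sorted products. That straightening also shows that the chosen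
rearrangements are unitriangular with respect to the sorted basis, filtered by length, hence
form a basis as well.
-/

attribute [local instance 100] LieRing.ofAssociativeRing

/-- The canonical (injective) Lie algebra map from the free Lie algebra on `B` into the
free associative ℤ-algebra `T(B)`, its universal enveloping algebra. -/
noncomputable def freeLieToFreeAssoc (B : Type*) :
    FreeLieAlgebra ℤ B →ₗ⁅ℤ⁆ FreeAlgebra ℤ B :=
  FreeLieAlgebra.lift ℤ (FreeAlgebra.ι ℤ)

open Submodule

namespace Module.Basis

variable {κ R M β : Type*} [Ring R] [AddCommGroup M] [Module R M] [LinearOrder β]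
  (v : Basis κ R M) (deg : κ → β) {p : κ → M}

lemma repr_apply_of_unitriangular
    (hp : ∀ k, p k - v k ∈ span R (v '' {m | deg m < deg k})) {k l : κ}
    (hkl : deg k ≤ deg l) :
    v.repr (p k) l = Finsupp.single k 1 l := by
  have hlow : v.repr (p k - v k) l = 0 := by
    by_contra h
    have := v.repr_support_subset_of_mem_span _ (hp k) (Finsupp.mem_support_iff.mpr h)
    exact (not_lt_of_ge hkl) this
  rw [← sub_add_cancel (p k) (v k), map_add, Finsupp.add_apply, hlow, zero_add, v.repr_self]

lemma linearIndependent_of_unitriangular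
    (hp : ∀ k, p k - v k ∈ span R (v '' {m | deg m < deg k})) : LinearIndependent R p := by
  rw [linearIndependent_iff]
  intro c hc
  by_contra hc0
  obtain ⟨l, hl, hmax⟩ :=
    c.support.exists_max_image deg (Finsupp.support_nonempty_iff.mpr hc0)
  have hcoeff : v.repr (Finsupp.linearCombination R p c) l = c l := by
    rw [Finsupp.linearCombination_apply, map_finsuppSum, Finsupp.sum_apply,
      Finsupp.sum_eq_single l]
    · simp [repr_apply_of_unitriangular v deg hp le_rfl]
    · intro k hk hkl
      simp [repr_apply_of_unitriangular v deg hp (hmax k (Finsupp.mem_support_iff.mpr hk)),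
        hkl]
    · simp
  rw [hc, map_zero, Finsupp.zero_apply] at hcoeff
  exact Finsupp.mem_support_iff.mp hl hcoeff.symm

variable [WellFoundedLT β]

lemma span_range_eq_top_of_unitriangular
    (hp : ∀ k, p k - v k ∈ span R (v '' {m | deg m < deg k})) : span R (Set.range p) = ⊤ := by
  have hv : ∀ k, v k ∈ span R (Set.range p) := by
    intro k
    induction k using (InvImage.wf deg wellFounded_lt).induction with
    | _ k ih =>
      have hlow : span R (v '' {m | deg m < deg k}) ≤ span R (Set.range p) :=
        span_le.mpr <| by rintro _ ⟨m, hm, rfl⟩; exact ih m hm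
      rw [← sub_sub_cancel (p k) (v k)]
      exact sub_mem (subset_span ⟨k, rfl⟩) (hlow (hp k))
  rw [eq_top_iff, ← v.span_eq, span_le]
  rintro _ ⟨k, rfl⟩
  exact hv k

noncomputable def ofUnitriangular
    (hp : ∀ k, p k - v k ∈ span R (v '' {m | deg m < deg k})) : Basis κ R M :=
  .mk (v.linearIndependent_of_unitriangular deg hp)
    (v.span_range_eq_top_of_unitriangular deg hp).ge

@[simp] lemma ofUnitriangular_apply (hp : ∀ k, p k - v k ∈ span R (v '' {m | deg m < deg k}))
    (k : κ) : v.ofUnitriangular deg hp k = p k :=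
  mk_apply _ _ _

end Module.Basis

namespace Module.End

lemma bracket_apply {R M : Type*} [Ring R] [AddCommGroup M] [Module R M]
    (f g : Module.End R M) (m : M) : ⁅f, g⁆ m = f (g m) - g (f m) :=
  rfl

end Module.End

namespace PBW

open Finsupp

section Words

variable {R L ι A : Type*} [CommRing R] [LieRing L] [LieAlgebra R L] [Ring A] [Algebra R A]
  (b : Module.Basis ι R L) (μ : L →ₗ⁅R⁆ A)

noncomputable def wordProd (lv : List ι) : A := (lv.map fun i => μ (b i)).prod

@[simp] lemma wordProd_nil : wordProd b μ [] = 1 := rfl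

@[simp] lemma wordProd_cons (i : ι) (lv : List ι) :
    wordProd b μ (i :: lv) = μ (b i) * wordProd b μ lv :=
  List.prod_cons

variable {b μ} in
lemma mul_mem_of_forall_basis {s : Set A} {N : Submodule R A}
    (h : ∀ i, ∀ w ∈ s, μ (b i) * w ∈ N) (x : L) {w : A} (hw : w ∈ span R s) : μ x * w ∈ N := by
  induction b.mem_span x using Submodule.span_induction with
  | mem _ hx =>
    obtain ⟨i, rfl⟩ := hx
    exact (span_le (p := N.comap (LinearMap.mulLeft R (μ (b i))))).mpr (h i) hw
  | zero => simp
  | add x y _ _ hx hy => rw [map_add, add_mul]; exact add_mem hx hy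
  | smul c x _ hx => rw [map_smul, smul_mul_assoc]; exact smul_mem _ c hx

end Words

abbrev SortedList (ι : Type*) [LinearOrder ι] := {l : List ι // l.Pairwise (· ≤ ·)}

namespace SortedList

variable {ι : Type*} [LinearOrder ι]

def nil : SortedList ι := ⟨[], .nil⟩

def orderedInsert (i : ι) (l : SortedList ι) : SortedList ι :=
  ⟨l.1.orderedInsert (· ≤ ·) i, l.2.orderedInsert i l.1⟩

@[simp] lemma length_orderedInsert (i : ι) (l : SortedList ι) :
    (orderedInsert i l).1.length = l.1.length + 1 :=
  List.orderedInsert_length _ _ _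

lemma orderedInsert_of_forall_le {i : ι} {l : SortedList ι} (h : ∀ x ∈ l.1, i ≤ x) :
    (orderedInsert i l).1 = i :: l.1 := by
  obtain ⟨_ | ⟨j, l⟩, _⟩ := l
  · rfl
  · exact List.orderedInsert_cons_of_le _ _ (h j List.mem_cons_self)

lemma orderedInsert_cons_of_lt {i j : ι} {l : List ι} (h : (j :: l).Pairwise (· ≤ ·))
    (hji : j < i) :
    (orderedInsert i ⟨j :: l, h⟩).1 = j :: (orderedInsert i ⟨l, h.of_cons⟩).1 :=
  if_neg (not_le.mpr hji)

lemma le_of_mem_orderedInsert {i j : ι} {l : SortedList ι} (hji : j ≤ i)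
    (hl : ∀ x ∈ l.1, j ≤ x) :
    ∀ x ∈ (orderedInsert i l).1, j ≤ x := by
  intro x hx
  rcases (List.mem_orderedInsert _).mp hx with rfl | hx
  exacts [hji, hl x hx]

def sort (l : List ι) : SortedList ι :=
  ⟨l.insertionSort (· ≤ ·), List.pairwise_insertionSort _ _⟩

lemma sort_cons (i : ι) (l : List ι) : sort (i :: l) = orderedInsert i (sort l) := rfl

lemma sort_eq_of_perm {l : List ι} {s : SortedList ι} (h : l.Perm s.1) : sort l = s :=
  Subtype.ext <| List.Perm.eq_of_pairwise' (List.pairwise_insertionSort _ _) s.2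
    ((List.perm_insertionSort _ _).trans h)

end SortedList

open SortedList

section Representation

variable {R L ι : Type*} [CommRing R] [LieRing L] [LieAlgebra R L] [LinearOrder ι]

variable (R) in
def lengthLE (n : ℕ) : Submodule R (SortedList ι →₀ R) :=
  supported R R {m | m.1.length ≤ n}

lemma single_mem_lengthLE {m : SortedList ι} {n : ℕ} (h : m.1.length ≤ n) :
    single m 1 ∈ lengthLE R n :=
  single_mem_supported R 1 h

lemma lengthLE_mono : Monotone (lengthLE R (ι := ι)) :=
  fun _ _ h => supported_mono fun _ hm => le_trans hm h

lemma mem_lengthLE_succ_of_sub_mem {v : SortedList ι →₀ R} {i : ι} {l : SortedList ι}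
    (h : v - single (orderedInsert i l) 1 ∈ lengthLE R l.1.length) :
    v ∈ lengthLE R (l.1.length + 1) := by
  rw [← sub_add_cancel v (single (orderedInsert i l) 1)]
  exact add_mem (lengthLE_mono l.1.length.le_succ h) (single_mem_lengthLE (by simp))

/-- For `l = j :: l'` with `j < i`, the action of `b i` on `l` is forced to be
`b j • (b i • l') + ⁅b i, b j⁆ • l'`. The leading term of `b i • l'` is `orderedInsert i l'`,
on which `b j` acts by prepending `j`, so only shorter words recur; the length filter exposes
this to the termination checker and removes nothing (`basisAction_sub_single_mem`). -/
noncomputable def basisAction (b : Module.Basis ι R L) :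
    ι → SortedList ι → SortedList ι →₀ R
  | i, ⟨[], h⟩ => single (orderedInsert i ⟨[], h⟩) 1
  | i, ⟨j :: l, h⟩ => single (orderedInsert i ⟨j :: l, h⟩) 1 +
    if i ≤ j then 0 else
      let v := basisAction b i ⟨l, h.of_cons⟩ - single (orderedInsert i ⟨l, h.of_cons⟩) 1
      ∑ m ∈ (v.support.filter fun m => m.1.length ≤ l.length).attach,
          v m.1 • basisAction b j m.1
        + linearCombination R (fun k => basisAction b k ⟨l, h.of_cons⟩) (b.repr ⁅b i, b j⁆)
termination_by _ l => l.1.length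
decreasing_by
  all_goals simp_wf
  · have := (Finset.mem_filter.mp m.2).2; omega

variable (b : Module.Basis ι R L)

theorem basisAction_sub_single_mem (i : ι) (l : SortedList ι) :
    basisAction b i l - single (orderedInsert i l) 1 ∈ lengthLE R l.1.length := by
  fun_induction basisAction b i l with
  | case1 => simp
  | case2 i j l h _ _ ihm ihk =>
    rw [add_sub_cancel_left]
    split_ifs
    · exact zero_mem _
    refine add_mem (sum_mem fun m _ => smul_mem _ _ ?_) ?_
    · have hm := (Finset.mem_filter.mp m.2).2
      exact lengthLE_mono (by simpa using hm) (mem_lengthLE_succ_of_sub_mem (ihm m))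
    · rw [linearCombination_apply]
      exact sum_mem fun k _ => smul_mem _ _ (mem_lengthLE_succ_of_sub_mem (ihk k))

noncomputable def pbwAction : L →ₗ[R] Module.End R (SortedList ι →₀ R) :=
  b.constr R fun i => linearCombination R (basisAction b i)

lemma pbwAction_basis (i : ι) : pbwAction b (b i) = linearCombination R (basisAction b i) :=
  b.constr_basis R _ i

lemma pbwAction_basis_single (i : ι) (l : SortedList ι) :
    pbwAction b (b i) (single l 1) = basisAction b i l := by
  simp [pbwAction_basis]

lemma pbwAction_single (x : L) (l : SortedList ι) :
    pbwAction b x (single l 1) = linearCombination R (fun k => basisAction b k l) (b.repr x) := by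
  simp [pbwAction, Module.Basis.constr_apply, LinearMap.finsupp_sum_apply,
    linearCombination_apply]

lemma basisAction_of_forall_le {i : ι} {l : SortedList ι} (h : ∀ x ∈ l.1, i ≤ x) :
    basisAction b i l = single (orderedInsert i l) 1 := by
  obtain ⟨_ | ⟨j, l⟩, hl⟩ := l
  · rw [basisAction.eq_1]
  · rw [basisAction.eq_2, if_pos (h j List.mem_cons_self), add_zero]

theorem basisAction_cons_of_lt {i j : ι} {l : List ι} (h : (j :: l).Pairwise (· ≤ ·))
    (hji : j < i) :
    basisAction b i ⟨j :: l, h⟩ = pbwAction b (b j) (basisAction b i ⟨l, h.of_cons⟩)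
      + pbwAction b ⁅b i, b j⁆ (single ⟨l, h.of_cons⟩ 1) := by
  have hjl := le_of_mem_orderedInsert (l := ⟨l, h.of_cons⟩) hji.le (List.pairwise_cons.mp h).1
  set v := basisAction b i ⟨l, h.of_cons⟩ - single (orderedInsert i ⟨l, h.of_cons⟩) 1
  have hv : ↑v.support ⊆ {m : SortedList ι | m.1.length ≤ l.length} :=
    (mem_supported R v).mp (basisAction_sub_single_mem b i _)
  have hlead :
      orderedInsert j (orderedInsert i ⟨l, h.of_cons⟩) = orderedInsert i ⟨j :: l, h⟩ :=
    Subtype.ext <| (orderedInsert_of_forall_le hjl).trans (orderedInsert_cons_of_lt h hji).symm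
  have hlow : pbwAction b (b j) v =
      ∑ m ∈ (v.support.filter fun m => m.1.length ≤ l.length).attach,
        v m.1 • basisAction b j m.1 := by
    rw [Finset.sum_attach _ fun m => v m • basisAction b j m,
      Finset.filter_true_of_mem (p := fun m : SortedList ι => m.1.length ≤ l.length) hv,
      pbwAction_basis, linearCombination_apply, Finsupp.sum]
  rw [basisAction.eq_2, if_neg (not_le.mpr hji)]
  dsimp only
  rw [← hlow, pbwAction_single, ← hlead, ← basisAction_of_forall_le b hjl,
    ← pbwAction_basis_single, ← add_assoc, ← map_add, add_sub_cancel]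

def IsLieOnLengthLE (n : ℕ) : Prop :=
  ∀ (x y : L), ∀ u ∈ lengthLE R n,
    ⁅pbwAction b x, pbwAction b y⁆ u = pbwAction b ⁅x, y⁆ u

variable {b} in
lemma isLieOnLengthLE_of_basis {n : ℕ}
    (h : ∀ (i j : ι) (l : SortedList ι), l.1.length ≤ n →
      ⁅pbwAction b (b i), pbwAction b (b j)⁆ (single l 1) =
        pbwAction b ⁅b i, b j⁆ (single l 1)) :
    IsLieOnLengthLE b n := by
  intro x y u hu
  have hsingle : ∀ l : SortedList ι, l.1.length ≤ n →
      ⁅pbwAction b x, pbwAction b y⁆ (single l 1) = pbwAction b ⁅x, y⁆ (single l 1) := by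
    intro l hl
    have := LinearMap.ext_basis b b
      (B := ((LieModule.toEnd R (Module.End R (SortedList ι →₀ R))
          (Module.End R (SortedList ι →₀ R)) :
            Module.End R (SortedList ι →₀ R) →ₗ[R] _).compl₁₂ (pbwAction b) (pbwAction b)).compr₂
        (LinearMap.applyₗ (single l (1 : R))))
      (B' := ((LieModule.toEnd R L L : L →ₗ[R] Module.End R L).compr₂ (pbwAction b)).compr₂
        (LinearMap.applyₗ (single l (1 : R))))
      (by simpa using fun i j => h i j l hl)
    simpa using congr($this x y)
  rw [lengthLE, supported_eq_span_single] at hu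
  refine LinearMap.eqOn_span (R := R) (f := ⁅pbwAction b x, pbwAction b y⁆)
    (g := pbwAction b ⁅x, y⁆) ?_ hu
  rintro _ ⟨l, hl, rfl⟩
  exact hsingle l hl

lemma lie_pbwAction_basis_single_of_forall_le {i j : ι} (hji : j < i) {l : SortedList ι}
    (hl : ∀ x ∈ l.1, j ≤ x) :
    ⁅pbwAction b (b i), pbwAction b (b j)⁆ (single l 1) =
      pbwAction b ⁅b i, b j⁆ (single l 1) := by
  have hjl : orderedInsert j l = ⟨j :: l.1, List.pairwise_cons.mpr ⟨hl, l.2⟩⟩ :=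
    Subtype.ext (orderedInsert_of_forall_le hl)
  rw [Module.End.bracket_apply, pbwAction_basis_single, basisAction_of_forall_le b hl, hjl,
    pbwAction_basis_single, basisAction_cons_of_lt b _ hji, pbwAction_basis_single,
    add_sub_cancel_left]

lemma pbwAction_basis_pbwAction_basis_single_cons {n : ℕ} (hn : IsLieOnLengthLE b n)
    {p q k : ι} (hkp : k < p) (hkq : k < q) {l : List ι} (h : (k :: l).Pairwise (· ≤ ·))
    (hl : l.length ≤ n) :
    pbwAction b (b p) (pbwAction b (b q) (single ⟨k :: l, h⟩ 1)) =
      pbwAction b (b k) (pbwAction b (b p) (pbwAction b (b q) (single ⟨l, h.of_cons⟩ 1)))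
      + pbwAction b ⁅b p, b k⁆ (pbwAction b (b q) (single ⟨l, h.of_cons⟩ 1))
      + pbwAction b ⁅b q, b k⁆ (pbwAction b (b p) (single ⟨l, h.of_cons⟩ 1))
      + pbwAction b ⁅b p, ⁅b q, b k⁆⁆ (single ⟨l, h.of_cons⟩ 1) := by
  set u : SortedList ι →₀ R := single ⟨l, h.of_cons⟩ 1
  have hpk : ⁅pbwAction b (b p), pbwAction b (b k)⁆ (pbwAction b (b q) u) =
      pbwAction b ⁅b p, b k⁆ (pbwAction b (b q) u) := by
    rw [pbwAction_basis_single,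
      ← sub_add_cancel (basisAction b q _) (single (orderedInsert q _) 1), map_add, map_add,
      hn _ _ _ (lengthLE_mono hl (basisAction_sub_single_mem b q _)),
      lie_pbwAction_basis_single_of_forall_le b hkp
        (le_of_mem_orderedInsert hkq.le (List.pairwise_cons.mp h).1)]
  have hpqk :
      ⁅pbwAction b (b p), pbwAction b ⁅b q, b k⁆⁆ u = pbwAction b ⁅b p, ⁅b q, b k⁆⁆ u :=
    hn _ _ _ (single_mem_lengthLE hl)
  rw [Module.End.bracket_apply, sub_eq_iff_eq_add] at hpk hpqk
  rw [pbwAction_basis_single b q, basisAction_cons_of_lt b h hkq, ← pbwAction_basis_single,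
    map_add, hpk, hpqk]
  abel

/-- The core case `k < j < i` of the PBW theorem: expanded along their first letter `k`, the two
sides differ by the action of a Jacobi expression on the shorter word. -/
lemma lie_pbwAction_basis_single_cons {n : ℕ} (hn : IsLieOnLengthLE b n) {i j k : ι}
    (hji : j < i) (hkj : k < j) {l : List ι} (h : (k :: l).Pairwise (· ≤ ·))
    (hl : l.length ≤ n) :
    ⁅pbwAction b (b i), pbwAction b (b j)⁆ (single ⟨k :: l, h⟩ 1) =
      pbwAction b ⁅b i, b j⁆ (single ⟨k :: l, h⟩ 1) := by
  set u : SortedList ι →₀ R := single ⟨l, h.of_cons⟩ 1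
  have hku : pbwAction b (b k) u = single ⟨k :: l, h⟩ 1 := by
    rw [pbwAction_basis_single, basisAction_of_forall_le b (List.pairwise_cons.mp h).1]
    exact congrArg (single · 1)
      (Subtype.ext (orderedInsert_of_forall_le (List.pairwise_cons.mp h).1))
  have hij := congr(pbwAction b (b k) $(hn (b i) (b j) u (single_mem_lengthLE hl)))
  have hk := hn (b k) ⁅b i, b j⁆ u (single_mem_lengthLE hl)
  have hjacobi : ⁅b k, ⁅b i, b j⁆⁆ + ⁅b i, ⁅b j, b k⁆⁆ - ⁅b j, ⁅b i, b k⁆⁆ = 0 := by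
    rw [leibniz_lie (b i) (b j) (b k), ← lie_skew ⁅b i, b j⁆ (b k)]
    abel
  have hjacobi_u := congr(pbwAction b $hjacobi u)
  simp only [map_add, map_sub, map_zero, LinearMap.add_apply, LinearMap.sub_apply,
    LinearMap.zero_apply] at hjacobi_u
  rw [Module.End.bracket_apply, map_sub] at hij
  rw [Module.End.bracket_apply] at hk
  rw [Module.End.bracket_apply,
    pbwAction_basis_pbwAction_basis_single_cons b hn (hkj.trans hji) hkj h hl,
    pbwAction_basis_pbwAction_basis_single_cons b hn hkj (hkj.trans hji) h hl, ← hku]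
  linear_combination (norm := module) hij + hk + hjacobi_u

lemma lie_pbwAction_basis_single_of_lt {i j : ι} (hji : j < i) (l : SortedList ι)
    (hl : ∀ n < l.1.length, IsLieOnLengthLE b n) :
    ⁅pbwAction b (b i), pbwAction b (b j)⁆ (single l 1) =
      pbwAction b ⁅b i, b j⁆ (single l 1) := by
  by_cases hjl : ∀ x ∈ l.1, j ≤ x
  · exact lie_pbwAction_basis_single_of_forall_le b hji hjl
  obtain ⟨_ | ⟨k, l⟩, h⟩ := l
  · exact absurd (fun x hx => by simp at hx) hjl
  simp only [not_forall, not_le] at hjl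
  obtain ⟨x, hx, hxj⟩ := hjl
  have hkx : k ≤ x :=
    (List.mem_cons.mp hx).elim (fun h => h ▸ le_rfl) ((List.pairwise_cons.mp h).1 x)
  exact lie_pbwAction_basis_single_cons b (hl l.length (by simp)) hji (hkx.trans_lt hxj) h le_rfl

theorem isLieOnLengthLE (n : ℕ) : IsLieOnLengthLE b n := by
  induction n using Nat.strong_induction_on with
  | _ n ih =>
    refine isLieOnLengthLE_of_basis fun i j l hl => ?_
    have hl' : ∀ m < l.1.length, IsLieOnLengthLE b m := fun m hm => ih m (by omega)
    rcases lt_trichotomy j i with hji | rfl | hij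
    · exact lie_pbwAction_basis_single_of_lt b hji l hl'
    · simp
    · rw [← lie_skew, ← lie_skew (b i), map_neg, LinearMap.neg_apply, LinearMap.neg_apply,
        lie_pbwAction_basis_single_of_lt b hij l hl']

theorem pbwAction_lie (x y : L) : pbwAction b ⁅x, y⁆ = ⁅pbwAction b x, pbwAction b y⁆ :=
  lhom_ext fun l c =>
    (isLieOnLengthLE b l.1.length x y _ (single_mem_supported R c (le_refl l.1.length))).symm

noncomputable def pbwRep : L →ₗ⁅R⁆ Module.End R (SortedList ι →₀ R) :=
  { pbwAction b with map_lie' := pbwAction_lie b _ _ }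

end Representation

section Algebra

variable {R L ι A : Type*} [CommRing R] [LieRing L] [LieAlgebra R L] [LinearOrder ι] [Ring A]
  [Algebra R A] (b : Module.Basis ι R L) (μ : L →ₗ⁅R⁆ A)

noncomputable def sortedSpanLT (n : ℕ) : Submodule R A :=
  span R ((fun l : SortedList ι => wordProd b μ l.1) '' {l | l.1.length < n})

lemma wordProd_mem_sortedSpanLT {l : SortedList ι} {n : ℕ} (h : l.1.length < n) :
    wordProd b μ l.1 ∈ sortedSpanLT b μ n :=
  subset_span ⟨l, h, rfl⟩

lemma sortedSpanLT_mono : Monotone (sortedSpanLT b μ) :=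
  fun _ _ h => span_mono (Set.image_mono fun _ hl => lt_of_lt_of_le hl h)

lemma mul_mem_sortedSpanLT_succ {n : ℕ}
    (h : ∀ i (l : SortedList ι), l.1.length < n →
      μ (b i) * wordProd b μ l.1 ∈ sortedSpanLT b μ (n + 1))
    (x : L) {w : A} (hw : w ∈ sortedSpanLT b μ n) : μ x * w ∈ sortedSpanLT b μ (n + 1) :=
  mul_mem_of_forall_basis (by rintro i _ ⟨l, hl, rfl⟩; exact h i l hl) x hw

lemma mul_wordProd_mem_of_sub_mem {i : ι} {l : SortedList ι}
    (h : μ (b i) * wordProd b μ l.1 - wordProd b μ (orderedInsert i l).1 ∈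
      sortedSpanLT b μ (l.1.length + 1)) :
    μ (b i) * wordProd b μ l.1 ∈ sortedSpanLT b μ (l.1.length + 2) := by
  rw [← sub_add_cancel (μ (b i) * _) (wordProd b μ (orderedInsert i l).1)]
  exact add_mem (sortedSpanLT_mono b μ (by omega) h) (wordProd_mem_sortedSpanLT b μ (by simp))

theorem mul_wordProd_sub_wordProd_orderedInsert_mem (i : ι) (l : SortedList ι) :
    μ (b i) * wordProd b μ l.1 - wordProd b μ (orderedInsert i l).1 ∈
      sortedSpanLT b μ (l.1.length + 1) := by
  suffices ∀ n, ∀ l : SortedList ι, l.1.length < n → ∀ i,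
      μ (b i) * wordProd b μ l.1 - wordProd b μ (orderedInsert i l).1 ∈
        sortedSpanLT b μ (l.1.length + 1) from this _ l (Nat.lt_succ_self _) i
  intro n
  induction n with
  | zero => simp
  | succ n ih =>
    rintro ⟨_ | ⟨j, l⟩, h⟩ hl i
    · simp [orderedInsert]
    by_cases hij : i ≤ j
    · simp [orderedInsert, List.orderedInsert_cons_of_le _ _ hij]
    have hln : l.length < n := by simpa using hl
    have hweak : ∀ i' (m : SortedList ι), m.1.length < l.length + 1 →
        μ (b i') * wordProd b μ m.1 ∈ sortedSpanLT b μ (l.length + 1 + 1) := fun i' m hm =>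
      sortedSpanLT_mono b μ (by omega) (mul_wordProd_mem_of_sub_mem b μ (ih m (by omega) i'))
    set l' := orderedInsert i ⟨l, h.of_cons⟩
    have hsplit : μ (b i) * wordProd b μ (j :: l) - wordProd b μ (j :: l'.1) =
        μ (b j) * (μ (b i) * wordProd b μ l - wordProd b μ l'.1)
          + μ ⁅b i, b j⁆ * wordProd b μ l := by
      rw [LieHom.map_lie, Ring.lie_def, wordProd_cons, wordProd_cons]
      noncomm_ring
    rw [orderedInsert_cons_of_lt h (not_le.mp hij), hsplit]
    have h1 := mul_mem_sortedSpanLT_succ b μ hweak (b j) (ih ⟨l, h.of_cons⟩ hln i)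
    have h2 := mul_mem_sortedSpanLT_succ b μ hweak ⁅b i, b j⁆
      (wordProd_mem_sortedSpanLT b μ (l := ⟨l, h.of_cons⟩) (Nat.lt_succ_self _))
    exact add_mem h1 h2

theorem span_wordProd_eq_top (hgen : Algebra.adjoin R (Set.range μ) = ⊤) :
    span R (Set.range fun l : SortedList ι => wordProd b μ l.1) = ⊤ := by
  set S := span R (Set.range fun l : SortedList ι => wordProd b μ l.1)
  have hmul : ∀ x, ∀ w ∈ S, μ x * w ∈ S := by
    refine fun x w hw => mul_mem_of_forall_basis (b := b) ?_ x hw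
    rintro i _ ⟨l, rfl⟩
    rw [← sub_add_cancel (μ (b i) * _) (wordProd b μ (orderedInsert i l).1)]
    exact add_mem (span_mono (Set.image_subset_range _ _)
      (mul_wordProd_sub_wordProd_orderedInsert_mem b μ i l)) (subset_span ⟨_, rfl⟩)
  have hclosure : (Submonoid.closure (Set.range μ) : Set A) ⊆ S := fun w hw =>
    Submonoid.closure_induction_left (subset_span ⟨(nil : SortedList ι), rfl⟩)
      (by rintro _ ⟨x, rfl⟩ y _ hy; exact hmul x y hy) hw
  rw [eq_top_iff, ← Algebra.top_toSubmodule, ← hgen, Algebra.adjoin_eq_span]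
  exact span_le.mpr hclosure

theorem linearIndependent_wordProd (Φ : A →ₐ[R] Module.End R (SortedList ι →₀ R))
    (hΦ : ∀ x, Φ (μ x) = pbwAction b x) :
    LinearIndependent R fun l : SortedList ι => wordProd b μ l.1 := by
  have hΦnil : ∀ l : SortedList ι, Φ (wordProd b μ l.1) (single nil 1) = single l 1 := by
    rintro ⟨lv, h⟩
    induction lv with
    | nil => rw [wordProd_nil, map_one]; rfl
    | cons i lv ih =>
      rw [wordProd_cons, map_mul, Module.End.mul_apply, ih h.of_cons, hΦ, pbwAction_basis_single,
        basisAction_of_forall_le b (List.pairwise_cons.mp h).1]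
      exact congrArg (single · 1)
        (Subtype.ext (orderedInsert_of_forall_le (List.pairwise_cons.mp h).1))
  refine LinearIndependent.of_comp ((LinearMap.applyₗ (single nil 1)) ∘ₗ Φ.toLinearMap) ?_
  convert Finsupp.linearIndependent_single_one R (SortedList ι) with l
  exact hΦnil l

noncomputable def pbwBasis (hΦ : ∃ Φ : A →ₐ[R] Module.End R (SortedList ι →₀ R),
      ∀ x, Φ (μ x) = pbwAction b x)
    (hgen : Algebra.adjoin R (Set.range μ) = ⊤) : Module.Basis (SortedList ι) R A :=
  .mk (hΦ.elim fun Φ hΦ => linearIndependent_wordProd b μ Φ hΦ)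
    (span_wordProd_eq_top b μ hgen).ge

@[simp] lemma coe_pbwBasis (hΦ : ∃ Φ : A →ₐ[R] Module.End R (SortedList ι →₀ R),
      ∀ x, Φ (μ x) = pbwAction b x)
    (hgen : Algebra.adjoin R (Set.range μ) = ⊤) :
    ⇑(pbwBasis b μ hΦ hgen) = fun l => wordProd b μ l.1 :=
  Module.Basis.coe_mk _ _

theorem wordProd_sub_wordProd_sort_mem (lv : List ι) :
    wordProd b μ lv - wordProd b μ (sort lv).1 ∈ sortedSpanLT b μ lv.length := by
  induction lv with
  | nil => simp [sort]
  | cons i lv ih =>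
    have hsplit : wordProd b μ (i :: lv) - wordProd b μ (sort (i :: lv)).1 =
        μ (b i) * (wordProd b μ lv - wordProd b μ (sort lv).1)
          + (μ (b i) * wordProd b μ (sort lv).1
            - wordProd b μ (orderedInsert i (sort lv)).1) := by
      rw [wordProd_cons, sort_cons, mul_sub]
      abel
    have hlen : (sort lv).1.length = lv.length := List.length_insertionSort _ _
    have hweak : ∀ i' (m : SortedList ι), m.1.length < lv.length →
        μ (b i') * wordProd b μ m.1 ∈ sortedSpanLT b μ (lv.length + 1) := fun i' m hm =>
      sortedSpanLT_mono b μ (by omega)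
        (mul_wordProd_mem_of_sub_mem b μ (mul_wordProd_sub_wordProd_orderedInsert_mem b μ i' m))
    rw [hsplit]
    refine add_mem (mul_mem_sortedSpanLT_succ b μ hweak _ ih) ?_
    simpa [hlen] using mul_wordProd_sub_wordProd_orderedInsert_mem b μ i (sort lv)

theorem exists_basis_wordProd_of_perm
    (hΦ : ∃ Φ : A →ₐ[R] Module.End R (SortedList ι →₀ R), ∀ x, Φ (μ x) = pbwAction b x)
    (hgen : Algebra.adjoin R (Set.range μ) = ⊤) (r : SortedList ι → List ι)
    (hr : ∀ l, (r l).Perm l.1) :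
    ∃ v : Module.Basis (SortedList ι) R A, ∀ l, v l = wordProd b μ (r l) := by
  have htri : ∀ l : SortedList ι, wordProd b μ (r l) - pbwBasis b μ hΦ hgen l ∈
      span R (pbwBasis b μ hΦ hgen '' {m | m.1.length < l.1.length}) := fun l => by
    have h := wordProd_sub_wordProd_sort_mem b μ (r l)
    rw [sort_eq_of_perm (hr l), (hr l).length_eq] at h
    rw [coe_pbwBasis]
    exact h
  exact ⟨_, Module.Basis.ofUnitriangular_apply (pbwBasis b μ hΦ hgen) (·.1.length) htri⟩

end Algebra

end PBW

namespace FreeLieAlgebra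

variable {R X E : Type*} [CommRing R] [Ring E] [Algebra R E]

lemma adjoin_range_lift_ι :
    Algebra.adjoin R
      (Set.range (lift R (FreeAlgebra.ι R) : FreeLieAlgebra R X → FreeAlgebra R X)) = ⊤ :=
  eq_top_mono (Algebra.adjoin_mono (by rintro _ ⟨a, rfl⟩; exact ⟨of R a, lift_of_apply _ _⟩))
    (FreeAlgebra.adjoin_range_ι R X)

lemma freeAlgebraLift_lift_ι_apply (ρ : FreeLieAlgebra R X →ₗ⁅R⁆ E) (x : FreeLieAlgebra R X) :
    FreeAlgebra.lift R (fun a => ρ (of R a)) (lift R (FreeAlgebra.ι R) x) = ρ x := by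
  have : (FreeAlgebra.lift R fun a => ρ (of R a)).toLieHom.comp (lift R (FreeAlgebra.ι R)) = ρ :=
    hom_ext fun a => by simp
  exact congr($this x)

end FreeLieAlgebra

theorem rearranged_PBW_basis_general (B : Type*) (ι : Type*) [LinearOrder ι]
    (b : Module.Basis ι ℤ (FreeLieAlgebra ℤ B))
    (r : {l : List ι // l.Pairwise (· ≤ ·)} → List ι)
    (hr : ∀ l : {l : List ι // l.Pairwise (· ≤ ·)}, (r l).Perm l.1) :
    ∃ v : Module.Basis {l : List ι // l.Pairwise (· ≤ ·)} ℤ (FreeAlgebra ℤ B),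
      ∀ l, v l = ((r l).map fun i => freeLieToFreeAssoc B (b i)).prod := by
  have hΦ : ∃ Φ : FreeAlgebra ℤ B →ₐ[ℤ] Module.End ℤ (PBW.SortedList ι →₀ ℤ),
      ∀ x, Φ (freeLieToFreeAssoc B x) = PBW.pbwAction b x :=
    ⟨_, FreeLieAlgebra.freeAlgebraLift_lift_ι_apply (PBW.pbwRep b)⟩
  exact PBW.exists_basis_wordProd_of_perm b _ hΦ FreeLieAlgebra.adjoin_range_lift_ι r hr

/-- **PBW with rearrangements.** Let `B` be a finite set, `M = (b i)_{i : ι}` a totally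
ordered ℤ-basis of the free Lie algebra `L(B)`, and for each nondecreasing word
`u = v₁⋯v_κ` in `M` choose an arbitrary rearrangement `u′`. Then the chosen rearranged
products form a ℤ-basis of `T(B)`, the free associative ℤ-algebra on `B`. -/
theorem rearranged_PBW_basis (B : Type*) [Fintype B] (ι : Type*) [LinearOrder ι]
    (b : Module.Basis ι ℤ (FreeLieAlgebra ℤ B))
    (r : {l : List ι // l.Pairwise (· ≤ ·)} → List ι)
    (hr : ∀ l : {l : List ι // l.Pairwise (· ≤ ·)}, (r l).Perm l.1) :
    ∃ v : Module.Basis {l : List ι // l.Pairwise (· ≤ ·)} ℤ (FreeAlgebra ℤ B),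
      ∀ l, v l = ((r l).map fun i => freeLieToFreeAssoc B (b i)).prod :=
  rearranged_PBW_basis_general B ι b r hr
end

section
/- Let G be a group generated by a set 𝒢, let S be a nonempty subset of G \ {1}, H the subgroup generated by S, and N_S the normal closure of S in G. Then N_S = H[H,G]; in particular N_S is generated by the elements [s, z₁^{ε₁}, …, z_κ^{ε_κ}] with κ ≥ 0, s ∈ S, ε_j = ±1 and z_j ∈ 𝒢. -/
open scoped commutatorElement

/-- Left-normed iterated group commutator `[s, z₁, …, z_κ]`. -/
def leftNormedComm {G : Type*} [Group G] (h : G) (l : List G) : G :=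
  l.foldl (fun a b => ⁅a, b⁆) h

/-
Mathlib's commutator is `⁅g, h⁆ = g h g⁻¹ h⁻¹`, so `g x g⁻¹ = ⁅g, x⁆ x`. Hence `H ⊔ ⁅H, ⊤⁆` is closed
under conjugation, and it is clearly contained in the normal closure of `H`. Likewise
`w c w⁻¹ = ⁅c, w⁆⁻¹ c`: conjugating an iterated commutator `c = [s, z₁, …, z_κ]` by a generator or
its inverse lands in the subgroup generated by the iterated commutators, which is therefore normal;
it contains `S` and lies in every normal subgroup containing `S`.
-/

section

variable {G : Type*} [Group G]

lemma leftNormedComm_append_singleton (h : G) (l : List G) (z : G) :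
    leftNormedComm h (l ++ [z]) = ⁅leftNormedComm h l, z⁆ := by
  simp [leftNormedComm]

lemma conj_leftNormedComm (h w : G) (l : List G) :
    w * leftNormedComm h l * w⁻¹ = (leftNormedComm h (l ++ [w]))⁻¹ * leftNormedComm h l := by
  rw [leftNormedComm_append_singleton, commutatorElement_inv, ← MulAut.conj_apply,
    conj_eq_commutatorElement_mul]

lemma Subgroup.Normal.leftNormedComm_mem {N : Subgroup G} (hN : N.Normal) {h : G} (hh : h ∈ N)
    (l : List G) : leftNormedComm h l ∈ N := by
  induction l generalizing h with
  | nil => exact hh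
  | cons z l ih =>
    exact ih (Subgroup.commutator_le_left N ⊤
      (Subgroup.commutator_mem_commutator hh (Subgroup.mem_top z)))

namespace Subgroup

instance normal_commutator_top (H : Subgroup G) : (⁅H, ⊤⁆ : Subgroup G).Normal :=
  normalizer_eq_top_iff.mp (top_le_iff.mp (normalizer_commutator_ge_right H ⊤))

theorem normal_sup_commutator_top (H : Subgroup G) : (H ⊔ ⁅H, ⊤⁆).Normal := by
  rw [← normalizer_eq_top_iff, eq_top_iff, sup_eq_closure, le_normalizer_closure_iff,
    ← sup_eq_closure]
  rintro g - x (hx | hx)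
  · rw [← MulAut.conj_apply, conj_eq_commutatorElement_mul]
    refine mul_mem (mem_sup_right ?_) (mem_sup_left hx)
    rw [commutator_comm]
    exact commutator_mem_commutator (mem_top g) hx
  · exact mem_sup_right ((normal_commutator_top H).conj_mem x hx g)

theorem normalClosure_eq_sup_commutator_top (H : Subgroup G) :
    normalClosure (H : Set G) = H ⊔ ⁅H, ⊤⁆ := by
  have := normal_sup_commutator_top H
  have hH : H ≤ normalClosure (H : Set G) := fun _ => (subset_normalClosure ·)
  refine le_antisymm (normalClosure_le_normal fun h hh => mem_sup_left hh) (sup_le hH ?_)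
  exact (commutator_mono hH le_rfl).trans (commutator_le_left _ ⊤)

theorem normal_closure_of_conj_mem {𝒢 s : Set G} (hgen : closure 𝒢 = ⊤)
    (hconj : ∀ w, w ∈ 𝒢 ∨ w⁻¹ ∈ 𝒢 → ∀ x ∈ s, w * x * w⁻¹ ∈ closure s) : (closure s).Normal := by
  have hmap : ∀ w, w ∈ 𝒢 ∨ w⁻¹ ∈ 𝒢 → ∀ x ∈ closure s, w * x * w⁻¹ ∈ closure s := by
    intro w hw x hx
    have : (closure s).map (MulAut.conj w).toMonoidHom ≤ closure s := by
      rw [MonoidHom.map_closure, closure_le]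
      rintro _ ⟨y, hy, rfl⟩
      exact hconj w hw y hy
    exact this ⟨x, hx, rfl⟩
  rw [← normalizer_eq_top_iff, eq_top_iff, ← hgen, closure_le]
  refine fun w hw x => ⟨hmap w (.inl hw) x, fun hx => ?_⟩
  simpa [mul_assoc] using hmap w⁻¹ (.inr (by simpa using hw)) _ hx

end Subgroup

end

theorem normalClosure_eq_sub_mul_commutator_general {G : Type*} [Group G]
    (𝒢 : Set G) (hgen : Subgroup.closure 𝒢 = ⊤)
    (S : Set G) :
    Subgroup.normalClosure S =
      Subgroup.closure S ⊔ ⁅Subgroup.closure S, (⊤ : Subgroup G)⁆ ∧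
    Subgroup.normalClosure S =
      Subgroup.closure
        {x | ∃ s ∈ S, ∃ l : List G, (∀ z ∈ l, z ∈ 𝒢 ∨ z⁻¹ ∈ 𝒢) ∧
          x = leftNormedComm s l} := by
  set D := {x | ∃ s ∈ S, ∃ l : List G, (∀ z ∈ l, z ∈ 𝒢 ∨ z⁻¹ ∈ 𝒢) ∧ x = leftNormedComm s l}
  refine ⟨?_, le_antisymm ?_ ?_⟩
  · rw [← Subgroup.normalClosure_eq_sup_commutator_top,
      Subgroup.normalClosure_closure_eq_normalClosure]
  · have : (Subgroup.closure D).Normal := Subgroup.normal_closure_of_conj_mem hgen (by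
      rintro w hw _ ⟨s, hs, l, hl, rfl⟩
      rw [conj_leftNormedComm]
      refine mul_mem (inv_mem (Subgroup.subset_closure ⟨s, hs, l ++ [w], ?_, rfl⟩))
        (Subgroup.subset_closure ⟨s, hs, l, hl, rfl⟩)
      simpa [or_imp, forall_and] using ⟨hl, hw⟩)
    exact Subgroup.normalClosure_le_normal fun s hs =>
      Subgroup.subset_closure ⟨s, hs, [], by simp, rfl⟩
  · rw [Subgroup.closure_le]
    rintro _ ⟨s, hs, l, -, rfl⟩
    exact Subgroup.normalClosure_normal.leftNormedComm_mem (Subgroup.subset_normalClosure hs) l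

/-- **Lemma 5.1(2).** Let `G` be generated by `𝒢`, `S ⊆ G \ {1}` nonempty, `H = ⟨S⟩` and
`N_S` the normal closure of `S` in `G`. Then `N_S = H[H,G]`; in particular `N_S` is
generated by the elements `[s, z₁^{ε₁}, …, z_κ^{ε_κ}]` with `κ ≥ 0`, `s ∈ S`,
`ε_j = ±1` and `z_j ∈ 𝒢`. -/
theorem normalClosure_eq_sub_mul_commutator {G : Type*} [Group G]
    (𝒢 : Set G) (hgen : Subgroup.closure 𝒢 = ⊤)
    (S : Set G) (hS : S.Nonempty) (hS1 : (1 : G) ∉ S) :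
    Subgroup.normalClosure S =
      Subgroup.closure S ⊔ ⁅Subgroup.closure S, (⊤ : Subgroup G)⁆ ∧
    Subgroup.normalClosure S =
      Subgroup.closure
        {x | ∃ s ∈ S, ∃ l : List G, (∀ z ∈ l, z ∈ 𝒢 ∨ z⁻¹ ∈ 𝒢) ∧
          x = leftNormedComm s l} :=
  normalClosure_eq_sub_mul_commutator_general 𝒢 hgen S
end

section
/- Let L be a free Lie ring over ℤ and J an ideal generated by a nonempty set of simple Lie commutators. Let N be the normal closure in the free group F of corresponding group relators lying in γ_e(F) \ γ_{e+1}(F), with images ρ₁,…,ρ_t generating the ideal I of gr(F). Then I = 𝓛(N) if and only if the induced homomorphism ξ : I/[I,I] → 𝓛(N)/[𝓛(N), 𝓛(N)] is surjective. -/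
/-!
`𝓛(N)` is a Lie ideal of `gr(F)` (as `N` is normal) containing the `ρ_i`, hence `I`; and `I` is a
graded ideal, being generated by homogeneous elements. Since the bracket raises degree, the
degree-`d` component of an element of `[𝓛(N), 𝓛(N)]` is a sum of brackets of homogeneous elements
of `𝓛(N)` of degrees `< d`. So if `𝓛(N) ⊆ I + [𝓛(N), 𝓛(N)]`, induction on the degree shows that
every homogeneous component of `𝓛(N)` lies in `I`: a graded Nakayama argument.
-/

noncomputable section

open scoped commutatorElement

/-- An identification of `L` with `gr(G)`, the graded Lie ring of the lower central
series of `G` (see the paper, Section 5). -/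
structure GrIdentification (G : Type*) [Group G] (L : Type*)
    [LieRing L] [LieAlgebra ℤ L] where
  φ : ℕ → G → L
  map_mul : ∀ d, ∀ x ∈ (⊤ : Subgroup G).lowerCentralSeries d, ∀ y ∈ (⊤ : Subgroup G).lowerCentralSeries d,
    φ d (x * y) = φ d x + φ d y
  ker_eq : ∀ d, ∀ x ∈ (⊤ : Subgroup G).lowerCentralSeries d,
    (φ d x = 0 ↔ x ∈ (⊤ : Subgroup G).lowerCentralSeries (d + 1))
  map_comm : ∀ d e, ∀ x ∈ (⊤ : Subgroup G).lowerCentralSeries d, ∀ y ∈ (⊤ : Subgroup G).lowerCentralSeries e,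
    φ (d + e + 1) ⁅x, y⁆ = ⁅φ d x, φ e y⁆
  internal : DirectSum.IsInternal
    (fun d => Submodule.span ℤ (φ d '' ((⊤ : Subgroup G).lowerCentralSeries d : Set G)))

theorem Subgroup.commutator_commutator_le_of_rotate {G : Type*} [Group G]
    {A B C N : Subgroup G} [N.Normal] (h1 : ⁅⁅B, C⁆, A⁆ ≤ N) (h2 : ⁅⁅C, A⁆, B⁆ ≤ N) :
    ⁅⁅A, B⁆, C⁆ ≤ N := by
  have key : ∀ X Y Z : Subgroup G, ⁅⁅X, Y⁆, Z⁆ ≤ N ↔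
      ⁅⁅X.map (QuotientGroup.mk' N), Y.map (QuotientGroup.mk' N)⁆,
        Z.map (QuotientGroup.mk' N)⁆ = ⊥ := fun X Y Z => by
    rw [← Subgroup.map_commutator, ← Subgroup.map_commutator, Subgroup.map_eq_bot_iff,
      QuotientGroup.ker_mk']
  rw [key]
  exact Subgroup.commutator_commutator_eq_bot_of_rotate ((key _ _ _).mp h1) ((key _ _ _).mp h2)

theorem Subgroup.commutator_lowerCentralSeries_le {G : Type*} [Group G] (S : Subgroup G)
    [S.Normal] (i j : ℕ) :
    ⁅S.lowerCentralSeries i, S.lowerCentralSeries j⁆ ≤ S.lowerCentralSeries (i + j + 1) := by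
  induction j generalizing i with
  | zero => exact le_rfl
  | succ j ih =>
    rw [lowerCentralSeries_succ, commutator_comm]
    refine commutator_commutator_le_of_rotate ?_ ?_
    · rw [commutator_comm S, ← lowerCentralSeries_succ]
      simpa only [Nat.add_right_comm, Nat.add_assoc] using ih (i + 1)
    · rw [show i + (j + 1) + 1 = i + j + 1 + 1 by omega, lowerCentralSeries_succ]
      exact commutator_mono (ih i) le_rfl

section LieBracket

variable {R L : Type*} [CommRing R] [LieRing L] [LieAlgebra R L]

theorem lie_mem_of_mem_span {S T : Set L} {P : Submodule R L}
    (h : ∀ x ∈ S, ∀ y ∈ T, ⁅x, y⁆ ∈ P) {x y : L} (hx : x ∈ Submodule.span R S)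
    (hy : y ∈ Submodule.span R T) : ⁅x, y⁆ ∈ P := by
  have hle : Submodule.map₂ (LieModule.toEnd R L L : L →ₗ[R] Module.End R L)
      (Submodule.span R S) (Submodule.span R T) ≤ P := by
    rw [Submodule.map₂_span_span, Submodule.span_le]
    rintro _ ⟨x, hx, y, hy, rfl⟩
    exact h x hx y hy
  exact hle (Submodule.apply_mem_map₂ _ hx hy)

theorem lie_mem_of_mem_iSup {ι κ : Type*} {A : ι → Submodule R L} {B : κ → Submodule R L}
    {P : Submodule R L} (h : ∀ i j, ∀ x ∈ A i, ∀ y ∈ B j, ⁅x, y⁆ ∈ P) {x y : L}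
    (hx : x ∈ ⨆ i, A i) (hy : y ∈ ⨆ j, B j) : ⁅x, y⁆ ∈ P := by
  rw [Submodule.iSup_eq_span] at hx hy
  refine lie_mem_of_mem_span ?_ hx hy
  simp only [Set.mem_iUnion, SetLike.mem_coe]
  rintro x ⟨i, hx⟩ y ⟨j, hy⟩
  exact h i j x hx y hy

end LieBracket

namespace DirectSum

section Module

variable {ι R M : Type*} [DecidableEq ι] [Semiring R] [AddCommMonoid M] [Module R M]
  (ℳ : ι → Submodule R M) [Decomposition ℳ]

theorem decompose_mem_of_mem {J : Submodule R M} {z : M} {n d : ι} (hz : z ∈ ℳ n)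
    (h : n = d → z ∈ J) : (decompose ℳ z d : M) ∈ J := by
  rcases eq_or_ne n d with rfl | hne
  · rw [decompose_of_mem_same ℳ hz]
    exact h rfl
  · rw [decompose_of_mem_ne ℳ hz hne]
    exact J.zero_mem

theorem decompose_mem_of_mem_iSup_inf {J : Submodule R M} {x : M} (hx : x ∈ ⨆ n, J ⊓ ℳ n)
    (d : ι) : (decompose ℳ x d : M) ∈ J := by
  induction hx using Submodule.iSup_induction' with
  | mem n z hz => exact decompose_mem_of_mem ℳ hz.2 fun _ => hz.1
  | zero => simp
  | add u v _ _ hu hv =>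
    rw [decompose_add, add_apply, Submodule.coe_add]
    exact add_mem hu hv

end Module

variable {R L : Type*} [CommRing R] [LieRing L] [LieAlgebra R L]
  {D : ℕ → Submodule R L} [Decomposition D]

theorem lieSpan_isHomogeneous (hD : ∀ p q, ∀ x ∈ D p, ∀ y ∈ D q, ⁅x, y⁆ ∈ D (p + q + 1))
    {S : Set L} (hS : ∀ s ∈ S, SetLike.IsHomogeneousElem D s) :
    SetLike.IsHomogeneous D (LieSubmodule.lieSpan R L S) := by
  let J := LieSubmodule.lieSpan R L S
  let P : LieIdeal R L :=
    { (⨆ n, J.toSubmodule ⊓ D n : Submodule R L) with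
      lie_mem := fun {x y} hy => by
        have hx : x ∈ ⨆ n, D n := (Decomposition.isInternal D).submodule_iSup_eq_top ▸
          Submodule.mem_top
        refine lie_mem_of_mem_iSup (fun p q a ha b hb => ?_) hx hy
        exact Submodule.mem_iSup_of_mem (p + q + 1) ⟨J.lie_mem hb.1, hD p q a ha b hb.2⟩ }
  have hJP : J ≤ P := LieSubmodule.lieSpan_le.mpr fun s hs => by
    obtain ⟨n, hn⟩ := hS s hs
    exact Submodule.mem_iSup_of_mem n ⟨LieSubmodule.subset_lieSpan hs, hn⟩
  exact fun d x hx => decompose_mem_of_mem_iSup_inf D (hJP hx) d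

theorem iSup_le_of_le_sup_span_lie (hD : ∀ p q, ∀ x ∈ D p, ∀ y ∈ D q, ⁅x, y⁆ ∈ D (p + q + 1))
    {M : ℕ → Submodule R L} (hMD : ∀ d, M d ≤ D d) {I : LieIdeal R L}
    (hI : SetLike.IsHomogeneous D I)
    (h : ⨆ d, M d ≤ I.toSubmodule ⊔
      Submodule.span R {z | ∃ a ∈ ⨆ d, M d, ∃ b ∈ ⨆ d, M d, z = ⁅a, b⁆}) :
    ⨆ d, M d ≤ I.toSubmodule := by
  refine iSup_le fun d => ?_
  induction d using Nat.strong_induction_on with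
  | _ d ih =>
    intro x hx
    obtain ⟨a, ha, b, hb, rfl⟩ := Submodule.mem_sup.mp (h (Submodule.mem_iSup_of_mem d hx))
    have hbrackets : Submodule.span R {z | ∃ a ∈ ⨆ d, M d, ∃ b ∈ ⨆ d, M d, z = ⁅a, b⁆} ≤
        I.toSubmodule.comap ((D d).subtype ∘ₗ component R ℕ (fun n => D n) d ∘ₗ
          (decomposeLinearEquiv D).toLinearMap) := by
      rw [Submodule.span_le]
      rintro _ ⟨a, ha, b, hb, rfl⟩
      refine lie_mem_of_mem_iSup (fun p q a ha b hb => ?_) ha hb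
      exact decompose_mem_of_mem D (hD p q a (hMD p ha) b (hMD q hb))
        fun hpq => I.lie_mem (ih q (by omega) hb)
    rw [← decompose_of_mem_same D (hMD d hx), decompose_add, add_apply, Submodule.coe_add]
    exact add_mem (hI d ha) (hbrackets hb)

end DirectSum

namespace GrIdentification

-- No `[LieAlgebra ℤ L]` binder: the spans in `GrIdentification` are over the canonical `ℤ`-module
-- structure of `L`, which is the one of the instance `LieRing.instLieAlgebra` found here.
variable {G L : Type*} [Group G] [LieRing L] (gr : GrIdentification G L)

/-- Degree `d` of `𝓛(H)`, which is the paper's degree `d + 1`: Mathlib's `lowerCentralSeries`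
starts at `γ₀ = ⊤`. -/
def leadingTermsOfDegree (H : Subgroup G) (d : ℕ) : Submodule ℤ L :=
  Submodule.span ℤ (gr.φ d '' ((H : Set G) ∩ ((⊤ : Subgroup G).lowerCentralSeries d : Set G)))

/-- `𝓛(H)` in the paper. -/
def leadingTerms (H : Subgroup G) : Submodule ℤ L :=
  ⨆ d, gr.leadingTermsOfDegree H d

variable {gr}

theorem leadingTermsOfDegree_mono {H K : Subgroup G} (hHK : H ≤ K) (d : ℕ) :
    gr.leadingTermsOfDegree H d ≤ gr.leadingTermsOfDegree K d :=
  Submodule.span_mono (Set.image_mono (Set.inter_subset_inter_left _ hHK))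

theorem leadingTerms_mono {H K : Subgroup G} (hHK : H ≤ K) :
    gr.leadingTerms H ≤ gr.leadingTerms K :=
  iSup_mono (leadingTermsOfDegree_mono hHK)

theorem lie_mem_leadingTermsOfDegree {H K : Subgroup G} {p q : ℕ} {x y : L}
    (hx : x ∈ gr.leadingTermsOfDegree H p) (hy : y ∈ gr.leadingTermsOfDegree K q) :
    ⁅x, y⁆ ∈ gr.leadingTermsOfDegree ⁅H, K⁆ (p + q + 1) := by
  unfold leadingTermsOfDegree at hx hy ⊢
  refine lie_mem_of_mem_span ?_ hx hy
  rintro _ ⟨g, ⟨hgH, hg⟩, rfl⟩ _ ⟨k, ⟨hkK, hk⟩, rfl⟩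
  rw [← gr.map_comm p q g hg k hk]
  exact Submodule.subset_span ⟨⁅g, k⁆, ⟨Subgroup.commutator_mem_commutator hgH hkK,
    Subgroup.commutator_lowerCentralSeries_le ⊤ p q (Subgroup.commutator_mem_commutator hg hk)⟩,
    rfl⟩

theorem lie_mem_leadingTerms {H K : Subgroup G} {x y : L} (hx : x ∈ gr.leadingTerms H)
    (hy : y ∈ gr.leadingTerms K) : ⁅x, y⁆ ∈ gr.leadingTerms ⁅H, K⁆ :=
  lie_mem_of_mem_iSup (fun p q _ hx _ hy =>
    Submodule.mem_iSup_of_mem (p + q + 1) (lie_mem_leadingTermsOfDegree hx hy)) hx hy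

theorem lie_mem_leadingTermsOfDegree_top (p q : ℕ) (x : L)
    (hx : x ∈ gr.leadingTermsOfDegree ⊤ p) (y : L) (hy : y ∈ gr.leadingTermsOfDegree ⊤ q) :
    ⁅x, y⁆ ∈ gr.leadingTermsOfDegree ⊤ (p + q + 1) :=
  leadingTermsOfDegree_mono le_top _ (lie_mem_leadingTermsOfDegree hx hy)

variable (gr)

theorem isInternal_leadingTermsOfDegree_top :
    DirectSum.IsInternal (gr.leadingTermsOfDegree ⊤) := by
  convert gr.internal using 3
  simp only [leadingTermsOfDegree, Subgroup.coe_top, Set.univ_inter]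

theorem leadingTerms_top : gr.leadingTerms ⊤ = ⊤ :=
  gr.isInternal_leadingTermsOfDegree_top.submodule_iSup_eq_top

def leadingTermsIdeal (N : Subgroup G) [N.Normal] : LieIdeal ℤ L :=
  { gr.leadingTerms N with
    lie_mem := fun {x _} hy =>
      have hx : x ∈ gr.leadingTerms ⊤ := gr.leadingTerms_top ▸ Submodule.mem_top
      leadingTerms_mono (Subgroup.commutator_le_right ⊤ N) (lie_mem_leadingTerms hx hy) }

end GrIdentification

theorem labute_criterion_general (m : ℕ)
    (gr : GrIdentification (FreeGroup (Fin m)) (FreeLieAlgebra ℤ (Fin m)))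
    (e : ℕ) (t : ℕ)
    (r : Fin t → FreeGroup (Fin m))
    (hr : ∀ i, r i ∈ (⊤ : Subgroup (FreeGroup (Fin m))).lowerCentralSeries (e - 1) ∧
      r i ∉ (⊤ : Subgroup (FreeGroup (Fin m))).lowerCentralSeries e) :
    let G := FreeGroup (Fin m)
    let L := FreeLieAlgebra ℤ (Fin m)
    let ρ : Fin t → L := fun i => gr.φ (e - 1) (r i)
    let I : LieIdeal ℤ L := LieSubmodule.lieSpan ℤ L (Set.range ρ)
    let N : Subgroup G := Subgroup.normalClosure (Set.range r)
    let LN : Submodule ℤ L := ⨆ d : ℕ,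
      Submodule.span ℤ (gr.φ d '' ((N : Set G) ∩ ((⊤ : Subgroup G).lowerCentralSeries d : Set G)))
    let DLN : Submodule ℤ L :=
      Submodule.span ℤ {z | ∃ a ∈ LN, ∃ b ∈ LN, z = ⁅a, b⁆}
    -- `I = 𝓛(N)` iff `ξ : I/[I,I] → 𝓛(N)/[𝓛(N),𝓛(N)]` is onto
    (I.toSubmodule = LN ↔ LN ≤ I.toSubmodule ⊔ DLN) := by
  intro G L ρ I N LN DLN
  have := gr.isInternal_leadingTermsOfDegree_top.chooseDecomposition
  have hρ (i : Fin t) : ρ i ∈ gr.leadingTermsOfDegree N (e - 1) :=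
    Submodule.subset_span ⟨r i, ⟨Subgroup.subset_normalClosure ⟨i, rfl⟩, (hr i).1⟩, rfl⟩
  have hIN : I ≤ gr.leadingTermsIdeal N := LieSubmodule.lieSpan_le.mpr <| by
    rintro _ ⟨i, rfl⟩
    exact Submodule.mem_iSup_of_mem (e - 1) (hρ i)
  have hI : DirectSum.SetLike.IsHomogeneous (ℳ := gr.leadingTermsOfDegree ⊤) I :=
    DirectSum.lieSpan_isHomogeneous GrIdentification.lie_mem_leadingTermsOfDegree_top <| by
      rintro _ ⟨i, rfl⟩
      exact ⟨e - 1, GrIdentification.leadingTermsOfDegree_mono le_top _ (hρ i)⟩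
  refine ⟨fun h => h ▸ le_sup_left, fun h => le_antisymm ?_ ?_⟩
  · exact (LieSubmodule.toSubmodule_le_toSubmodule _ _).mpr hIN
  · exact DirectSum.iSup_le_of_le_sup_span_lie GrIdentification.lie_mem_leadingTermsOfDegree_top
      (fun d => GrIdentification.leadingTermsOfDegree_mono le_top d) hI h

/-- **Labute's criterion (Lemma 5.2).** Let `F` be the free group of rank `m`,
`r₁,…,r_t ∈ γ_e(F) \ γ_{e+1}(F)` relators whose leading terms `ρ_i` are simple Lie
commutators generating the ideal `I` of `gr(F)`, and `N` the normal closure of the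
relators. Then `I = 𝓛(N)` if and only if the induced homomorphism
`ξ : I/[I,I] → 𝓛(N)/[𝓛(N),𝓛(N)]` is surjective. -/
theorem labute_criterion (m : ℕ) (hm : 2 ≤ m)
    (gr : GrIdentification (FreeGroup (Fin m)) (FreeLieAlgebra ℤ (Fin m)))
    (hgen : ∀ i : Fin m, gr.φ 0 (FreeGroup.of i) = FreeLieAlgebra.of ℤ i)
    (e : ℕ) (he : 2 ≤ e) (t : ℕ) (ht : 1 ≤ t)
    (r : Fin t → FreeGroup (Fin m))
    (hr : ∀ i, r i ∈ (⊤ : Subgroup (FreeGroup (Fin m))).lowerCentralSeries (e - 1) ∧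
      r i ∉ (⊤ : Subgroup (FreeGroup (Fin m))).lowerCentralSeries e)
    (hsimple : ∀ i, ∃ d, IsSimpleLieCommutator (Fin m) (gr.φ (e - 1) (r i)) d) :
    let G := FreeGroup (Fin m)
    let L := FreeLieAlgebra ℤ (Fin m)
    let ρ : Fin t → L := fun i => gr.φ (e - 1) (r i)
    let I : LieIdeal ℤ L := LieSubmodule.lieSpan ℤ L (Set.range ρ)
    let N : Subgroup G := Subgroup.normalClosure (Set.range r)
    let LN : Submodule ℤ L := ⨆ d : ℕ,
      Submodule.span ℤ (gr.φ d '' ((N : Set G) ∩ ((⊤ : Subgroup G).lowerCentralSeries d : Set G)))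
    let DLN : Submodule ℤ L :=
      Submodule.span ℤ {z | ∃ a ∈ LN, ∃ b ∈ LN, z = ⁅a, b⁆}
    -- `I = 𝓛(N)` iff `ξ : I/[I,I] → 𝓛(N)/[𝓛(N),𝓛(N)]` is onto
    (I.toSubmodule = LN ↔ LN ≤ I.toSubmodule ⊔ DLN) :=
  labute_criterion_general m gr e t r hr

end
end
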